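/- arXiv:math/0410570 — 7 statements merged into one kernel-verified Lean document; each statement's English description precedes it below -/
import Mathlib

section
/- Let T₀ ≥ 1 and τ : {0,1,…,T₀} → ℤ satisfy τ(1) > τ(0) = 0. Then the ℤ-rank of ℍ_red(R_τ,χ_τ) equals min_{0≤i≤T₀} τ(i) + Σ_{i=0}^{T₀−1} max{τ(i) − τ(i+1), 0}; moreover, in the decomposition ℍ(R_τ,χ_τ) ≅ T⁺_{2m} ⊕ ℍ_red(R_τ,χ_τ), the index satisfies m = min_{0≤i≤T₀} τ(i) = min_{v} χ_τ(v). -/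
noncomputable section

/-- `T⁺₀ = ℤ[U,U⁻¹]/(U·ℤ[U])`, modeled as finitely supported functions `ℕ → ℤ`;
`Finsupp.single h 1` represents `U^{-h}`, which is homogeneous of degree `2h`. -/
abbrev TPlus : Type := ℕ →₀ ℤ

/-- The `U`-action on `T⁺₀`: `U · U^{-h} = U^{-(h-1)}` for `h ≥ 1`, `U · U^0 = 0`. -/
def shiftU : TPlus →ₗ[ℤ] TPlus where
  toFun f := Finsupp.comapDomain (· + 1) f (fun a _ b _ h => by simpa using h)
  map_add' f g := by
    ext h
    exact rfl
  map_smul' c f := by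
    ext h
    exact rfl

lemma shiftU_apply (f : TPlus) (h : ℕ) : shiftU f h = f (h + 1) := rfl

/-- The submodule `T₀(n) ⊂ T⁺₀` spanned by `U^{-h}`, `0 ≤ h ≤ n-1`. -/
def Tower (n : ℕ) : Submodule ℤ TPlus where
  carrier := {f | ∀ h, n ≤ h → f h = 0}
  add_mem' := by
    intro a b ha hb h hh
    simp [Finsupp.add_apply, ha h hh, hb h hh]
  zero_mem' := by intro h hh; rfl
  smul_mem' := by
    intro c f hf h hh
    simp [Finsupp.smul_apply, hf h hh]

/-- Homogeneity of degree `d` in the shifted module `T⁺_r` or `T_r(n)`: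
the coefficient of `U^{-h}` has degree `2h + r`. -/
def THomog (r d : ℚ) (f : TPlus) : Prop := ∀ h : ℕ, f h ≠ 0 → 2 * (h : ℚ) + r = d

/-- `ℍ(R,χ)` for a graph with vertex set `V`, adjacency `Adj` and grading `χ`:
functions `φ` from vertices to `T⁺₀` with `U · φ(v) = φ(w)` along edges with `χ v < χ w`. -/
def Hmod {V : Type} (Adj : V → V → Prop) (χ : V → ℤ) : Submodule ℤ (V → TPlus) where
  carrier := {φ | ∀ v w, Adj v w → χ v < χ w → shiftU (φ v) = φ w}
  add_mem' := by
    intro a b ha hb v w hvw hχ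
    simp only [Pi.add_apply, map_add, ha v w hvw hχ, hb v w hvw hχ]
  zero_mem' := by intro v w _ _; simp
  smul_mem' := by
    intro c f hf v w hvw hχ
    simp only [Pi.smul_apply, map_smul, hf v w hvw hχ]

lemma mem_Hmod {V : Type} {Adj : V → V → Prop} {χ : V → ℤ} {φ : V → TPlus} :
    φ ∈ Hmod Adj χ ↔ ∀ v w, Adj v w → χ v < χ w → shiftU (φ v) = φ w := Iff.rfl

/-- The (pointwise) `U`-action on `ℍ(R,χ)`. -/
def HU {V : Type} (Adj : V → V → Prop) (χ : V → ℤ) : Hmod Adj χ →ₗ[ℤ] Hmod Adj χ where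
  toFun φ := ⟨fun v => shiftU (φ.1 v), by
    intro v w hvw hχ
    show shiftU (shiftU (φ.1 v)) = shiftU (φ.1 w)
    rw [mem_Hmod.1 φ.2 v w hvw hχ]⟩
  map_add' a b := by
    apply Subtype.ext
    funext v
    simp
  map_smul' c a := by
    apply Subtype.ext
    funext v
    simp

/-- Homogeneity of degree `d` in the shifted module `ℍ(R,χ)[r]`:
`φ` is homogeneous of degree `d` if each `φ(v)` is homogeneous of degree `d - r - 2χ(v)`
in `T⁺₀`. -/
def HHomog {V : Type} (χ : V → ℤ) (r d : ℚ) (φ : V → TPlus) : Prop :=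
  ∀ v, THomog (2 * (χ v : ℚ) + r) d (φ v)

/-- The underlying module of a direct sum `T⁺ ⊕ ⊕_{i ∈ I} T(len i)`. -/
abbrev Targ {I : Type} (len : I → ℕ) : Type := TPlus × ((i : I) → Tower (len i))

def towerShift {n : ℕ} (f : Tower n) : Tower n :=
  ⟨shiftU f.1, by
    intro h hh
    rw [shiftU_apply]
    exact f.2 (h + 1) (by omega)⟩

/-- The `U`-action on `Targ len`. -/
def TargU {I : Type} (len : I → ℕ) : Targ len →ₗ[ℤ] Targ len where
  toFun x := (shiftU x.1, fun i => towerShift (x.2 i))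
  map_add' a b := by
    refine Prod.ext ?_ ?_
    · simp
    · funext i
      apply Subtype.ext
      simp [towerShift]
  map_smul' c a := by
    refine Prod.ext ?_ ?_
    · simp
    · funext i
      apply Subtype.ext
      simp [towerShift]

/-- Homogeneity of degree `d` in `T⁺_{r₀} ⊕ ⊕_{i ∈ I} T_{rI i}(len i)`. -/
def TargHomog {I : Type} {len : I → ℕ} (r₀ : ℚ) (rI : I → ℚ) (d : ℚ) (x : Targ len) : Prop :=
  THomog r₀ d x.1 ∧ ∀ i, THomog (rI i) d ((x.2 i) : TPlus)

end

noncomputable section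

/-- Pre-vertices of the graded root `R_τ` associated with `τ : {0,…,T₀} → ℤ`:
pairs `(i,k)` with `i ≤ T₀` and `τ i ≤ k`, representing the vertex `v_i^k`. -/
def RootVpre (T0 : ℕ) (τ : ℕ → ℤ) : Type := {x : ℕ × ℤ // x.1 ≤ T0 ∧ τ x.1 ≤ x.2}

/-- The identification `v_i^k ∼ v_j^k` whenever `k ≥ τ(l)` for every `l` between `i` and `j`. -/
def RootSetoid (T0 : ℕ) (τ : ℕ → ℤ) : Setoid (RootVpre T0 τ) where
  r x y := x.1.2 = y.1.2 ∧
    ∀ l : ℕ, ((x.1.1 ≤ l ∧ l ≤ y.1.1) ∨ (y.1.1 ≤ l ∧ l ≤ x.1.1)) → τ l ≤ x.1.2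
  iseqv := by
    constructor
    · intro x
      refine ⟨rfl, ?_⟩
      intro l hl
      have : l = x.1.1 := by omega
      rw [this]
      exact x.2.2
    · intro x y h
      refine ⟨h.1.symm, ?_⟩
      intro l hl
      rw [← h.1]
      exact h.2 l (by tauto)
    · intro x y z hxy hyz
      refine ⟨hxy.1.trans hyz.1, ?_⟩
      intro l hl
      have h2 := hxy.2
      have h3 := hyz.2
      rcases (by omega :
          ((x.1.1 ≤ l ∧ l ≤ y.1.1) ∨ (y.1.1 ≤ l ∧ l ≤ x.1.1)) ∨
          ((y.1.1 ≤ l ∧ l ≤ z.1.1) ∨ (z.1.1 ≤ l ∧ l ≤ y.1.1))) with h | h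
      · exact h2 l h
      · rw [hxy.1]
        exact h3 l h

/-- The vertex set of the graded root `R_τ`. -/
def RootV (T0 : ℕ) (τ : ℕ → ℤ) : Type := Quotient (RootSetoid T0 τ)

/-- The grading `χ_τ` of `R_τ`. -/
def rootχ (T0 : ℕ) (τ : ℕ → ℤ) : RootV T0 τ → ℤ :=
  Quotient.lift (fun x : RootVpre T0 τ => x.1.2) (fun _ _ h => h.1)

/-- The vertex `v_i^{k+1}` above `v_i^k`. -/
def rootStep (T0 : ℕ) (τ : ℕ → ℤ) (x : RootVpre T0 τ) : RootVpre T0 τ :=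
  ⟨(x.1.1, x.1.2 + 1), x.2.1, by show τ x.1.1 ≤ x.1.2 + 1; have := x.2.2; omega⟩

/-- The edges of `R_τ`: each `v_i^k` is connected with `v_i^{k+1}`. -/
def rootAdj (T0 : ℕ) (τ : ℕ → ℤ) (u v : RootV T0 τ) : Prop :=
  (∃ x, u = Quotient.mk (RootSetoid T0 τ) x ∧
        v = Quotient.mk (RootSetoid T0 τ) (rootStep T0 τ x)) ∨
  (∃ x, v = Quotient.mk (RootSetoid T0 τ) x ∧
        u = Quotient.mk (RootSetoid T0 τ) (rootStep T0 τ x))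

/-- A vertex of `R_τ` (given `i ≤ T₀` and `τ i ≤ k`). -/
def rootMk (T0 : ℕ) (τ : ℕ → ℤ) (i : ℕ) (k : ℤ) (hi : i ≤ T0) (hk : τ i ≤ k) :
    RootV T0 τ :=
  Quotient.mk (RootSetoid T0 τ) ⟨(i, k), hi, hk⟩

/-- A local minimum point of a χ-graded graph. -/
def IsLocMin {V : Type} (Adj : V → V → Prop) (χ : V → ℤ) (v : V) : Prop :=
  ∀ w, Adj v w → χ v < χ w

end

/-!
A vertex of `R_τ` at level `k` is a maximal run of indices `i` with `τ i ≤ k`; we name it by its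
eldest index, the one minimising `(τ i, i)` lexicographically. Index `i` is the eldest on the
levels `τ i ≤ k < τ i + towerLen i`; at the next level its branch has merged into the branch of an
elder index, its `absorber`. The global eldest `iMin` never merges.

An element `φ` of `ℍ` is the same as a finitely supported choice of `U⁰`-coefficients `val φ i k`
at the vertices. The map sending `φ` to its values on the branch of `iMin` and, on the tower of
every other `i`, to the differences `val φ i k - val φ (absorber i) k`, is therefore an isomorphism
onto `T⁺ ⊕ ⨁ᵢ T(towerLen i)` commuting with `U`: its inverse sums the differences along the chain of
absorbers down to `iMin`.

Finally `∑ towerLen i` counts, level by level, the vertices other than the one of `iMin`. Counting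
the vertices at level `k` by their leftmost index instead, `i + 1` is leftmost exactly on the
levels `τ (i + 1) ≤ k < τ i`, which gives `τ iMin - τ 0 + ∑ max (τ i - τ (i + 1)) 0`.
-/

lemma Int.natCast_toNat_sub_of_le {R : Type*} [AddGroupWithOne R] {a b : ℤ} (h : a ≤ b) :
    ((b - a).toNat : R) = b - a := by
  rw [← Int.cast_natCast, Int.toNat_sub_of_le h, Int.cast_sub]

open Finset in
lemma Finset.card_filter_Ico_eq_max {m K a b : ℤ} {p : ℤ → Prop} [DecidablePred p]
    (hma : m ≤ a) (hbK : b ≤ K) (hp : ∀ k, m ≤ k → k < K → (p k ↔ a ≤ k ∧ k < b)) :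
    (#{k ∈ Ico m K | p k} : ℤ) = max (b - a) 0 := by
  have : {k ∈ Ico m K | p k} = Ico a b := by
    ext k
    simp only [mem_filter, mem_Ico]
    constructor
    · intro h; have := (hp k h.1.1 h.1.2).1 h.2; omega
    · intro h; exact ⟨by omega, (hp k (by omega) (by omega)).2 h⟩
  rw [this, Int.card_Ico, Int.ofNat_toNat]

noncomputable section

namespace RootTau

open Finset

variable (N : ℕ) (τ : ℕ → ℤ)

/-- When two branches merge, the branch of the index with the smaller key survives. -/
def key (i : ℕ) : ℤ ×ₗ ℕ := toLex (τ i, i)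

/-- `Joined N τ k i j` says that `v_i^k` and `v_j^k` are the same vertex of `R_τ`. -/
def Joined (k : ℤ) (i j : ℕ) : Prop :=
  i ≤ N ∧ j ≤ N ∧ ∀ l ∈ Icc (min i j) (max i j), τ l ≤ k

instance (k : ℤ) (i j : ℕ) : Decidable (Joined N τ k i j) := by
  unfold Joined; infer_instance

def component (k : ℤ) (i : ℕ) : Finset ℕ := (range (N + 1)).filter (Joined N τ k i)

def lexArgmin (s : Finset ℕ) : ℕ :=
  if h : s.Nonempty then (s.exists_min_image (key τ) h).choose else 0

def eldest (k : ℤ) (i : ℕ) : ℕ := lexArgmin τ (component N τ k i)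

structure IsEldest (k : ℤ) (c : ℕ) : Prop where
  le : c ≤ N
  tau_le : τ c ≤ k
  eldest_eq : eldest N τ k c = c

def tauMax : ℤ := (range (N + 1)).sup' nonempty_range_add_one τ

def iMin : ℕ := lexArgmin τ (range (N + 1))

variable {N τ}

lemma key_injective : Function.Injective (key τ) := fun _ _ h =>
  congrArg (fun p : ℤ ×ₗ ℕ => (ofLex p).2) h

lemma tau_le_of_key_le {a b : ℕ} (h : key τ a ≤ key τ b) : τ a ≤ τ b := by
  rcases Prod.Lex.toLex_le_toLex.1 h with h | h <;> omega

lemma lexArgmin_mem {s : Finset ℕ} (h : s.Nonempty) : lexArgmin τ s ∈ s := by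
  rw [lexArgmin, dif_pos h]
  exact (s.exists_min_image (key τ) h).choose_spec.1

lemma key_lexArgmin_le {s : Finset ℕ} {j : ℕ} (hj : j ∈ s) :
    key τ (lexArgmin τ s) ≤ key τ j := by
  rw [lexArgmin, dif_pos ⟨j, hj⟩]
  exact (s.exists_min_image (key τ) ⟨j, hj⟩).choose_spec.2 j hj

namespace Joined

variable {k k' : ℤ} {i j l : ℕ}

lemma refl (hi : i ≤ N) (hk : τ i ≤ k) : Joined N τ k i i :=
  ⟨hi, hi, fun l hl => by rw [mem_Icc] at hl; rwa [show l = i by omega]⟩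

lemma symm (h : Joined N τ k i j) : Joined N τ k j i :=
  ⟨h.2.1, h.1, fun l hl => h.2.2 l (by rw [mem_Icc] at hl ⊢; omega)⟩

lemma trans (h₁ : Joined N τ k i j) (h₂ : Joined N τ k j l) : Joined N τ k i l := by
  refine ⟨h₁.1, h₂.2.1, fun x hx => ?_⟩
  rw [mem_Icc] at hx
  by_cases hxj : min i j ≤ x ∧ x ≤ max i j
  · exact h₁.2.2 x (mem_Icc.2 hxj)
  · exact h₂.2.2 x (mem_Icc.2 (by omega))

lemma mono (hk : k ≤ k') (h : Joined N τ k i j) : Joined N τ k' i j :=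
  ⟨h.1, h.2.1, fun l hl => (h.2.2 l hl).trans hk⟩

lemma tau_left_le (h : Joined N τ k i j) : τ i ≤ k :=
  h.2.2 i (mem_Icc.2 ⟨min_le_left _ _, le_max_left _ _⟩)

lemma tau_right_le (h : Joined N τ k i j) : τ j ≤ k :=
  h.symm.tau_left_le

lemma of_tauMax_le (hi : i ≤ N) (hj : j ≤ N) (hk : tauMax N τ ≤ k) : Joined N τ k i j :=
  ⟨hi, hj, fun l hl => by
    rw [mem_Icc] at hl
    exact (le_sup' τ (mem_range.2 (by omega))).trans hk⟩

end Joined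

variable {k k' : ℤ} {i j c : ℕ}

lemma mem_component : j ∈ component N τ k i ↔ Joined N τ k i j := by
  simp only [component, mem_filter, mem_range, and_iff_right_iff_imp]
  exact fun h => Nat.lt_succ_of_le h.2.1

lemma component_eq (h : Joined N τ k i j) : component N τ k i = component N τ k j := by
  ext x
  simp only [mem_component]
  exact ⟨h.symm.trans, h.trans⟩

lemma eldest_eq_of_joined (h : Joined N τ k i j) : eldest N τ k i = eldest N τ k j := by
  rw [eldest, eldest, component_eq h]

lemma joined_eldest (hi : i ≤ N) (hk : τ i ≤ k) : Joined N τ k i (eldest N τ k i) :=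
  mem_component.1 (lexArgmin_mem ⟨i, mem_component.2 (Joined.refl hi hk)⟩)

lemma key_eldest_le (h : Joined N τ k i j) : key τ (eldest N τ k i) ≤ key τ j :=
  key_lexArgmin_le (mem_component.2 h)

lemma isEldest_eldest (hi : i ≤ N) (hk : τ i ≤ k) : IsEldest N τ k (eldest N τ k i) :=
  ⟨(joined_eldest hi hk).2.1, (joined_eldest hi hk).tau_right_le,
    (eldest_eq_of_joined (joined_eldest hi hk)).symm⟩

lemma le_tauMax (hi : i ≤ N) : τ i ≤ tauMax N τ :=
  le_sup' τ (mem_range.2 (by omega))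

lemma iMin_le : iMin N τ ≤ N :=
  Nat.le_of_lt_succ (mem_range.1 (lexArgmin_mem nonempty_range_add_one))

lemma key_iMin_le (hj : j ≤ N) : key τ (iMin N τ) ≤ key τ j :=
  key_lexArgmin_le (mem_range.2 (by omega))

lemma tau_iMin_le (hj : j ≤ N) : τ (iMin N τ) ≤ τ j :=
  tau_le_of_key_le (key_iMin_le hj)

lemma eldest_of_tauMax_le (hi : i ≤ N) (hk : tauMax N τ ≤ k) :
    eldest N τ k i = iMin N τ := by
  have : component N τ k i = range (N + 1) := by
    ext j
    rw [mem_component, mem_range]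
    exact ⟨fun h => by have := h.2.1; omega, fun h => Joined.of_tauMax_le hi (by omega) hk⟩
  rw [eldest, this, iMin]

lemma isEldest_iMin (hk : τ (iMin N τ) ≤ k) : IsEldest N τ k (iMin N τ) := by
  refine ⟨iMin_le, hk, ?_⟩
  have hj := joined_eldest iMin_le hk
  exact key_injective (le_antisymm (key_eldest_le (Joined.refl iMin_le hk)) (key_iMin_le hj.2.1))

lemma key_eldest_lt (hi : i ≤ N) (hk : τ i ≤ k) (hne : eldest N τ k i ≠ i) :
    key τ (eldest N τ k i) < key τ i :=
  lt_of_le_of_ne (key_eldest_le (Joined.refl hi hk)) (key_injective.ne hne)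

lemma eldest_ne_of_le (hi : i ≤ N) (hk : τ i ≤ k) (hkk : k ≤ k')
    (hne : eldest N τ k i ≠ i) : eldest N τ k' i ≠ i := fun heq => by
  have h := key_eldest_le (N := N) ((joined_eldest hi hk).mono hkk)
  rw [heq] at h
  exact (h.trans_lt (key_eldest_lt hi hk hne)).false

lemma exists_eldest_ne (hi : i ≤ N) (hne : i ≠ iMin N τ) :
    ∃ n : ℕ, eldest N τ (τ i + n) i ≠ i :=
  ⟨(tauMax N τ - τ i).toNat, by rw [eldest_of_tauMax_le hi (by omega)]; exact Ne.symm hne⟩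

variable (N τ) in
/-- The branch of `i` is the tower `v_i^k`, `τ i ≤ k < τ i + towerLen N τ i`, on which `i` is
the eldest index; `iMin` carries the infinite tower instead. -/
def towerLen (i : ℕ) : ℕ :=
  if h : i ≤ N ∧ i ≠ iMin N τ then Nat.find (exists_eldest_ne h.1 h.2) else 0

variable (N τ) in
def towerLens (i : Fin (N + 1)) : ℕ := towerLen N τ i

variable (N τ) in
def absorber (i : ℕ) : ℕ := eldest N τ (τ i + towerLen N τ i) i

lemma towerLen_iMin : towerLen N τ (iMin N τ) = 0 := dif_neg (by simp)

lemma towerLen_of_lt (hi : N < i) : towerLen N τ i = 0 := dif_neg (by omega)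

lemma ne_iMin_of_lt_towerLen {n : ℕ} (h : n < towerLen N τ i) : i ≠ iMin N τ := by
  rintro rfl
  rw [towerLen_iMin] at h
  exact Nat.not_lt_zero n h

lemma eldest_eq_self_iff (hi : i ≤ N) (hne : i ≠ iMin N τ) (hk : τ i ≤ k) :
    eldest N τ k i = i ↔ k < τ i + towerLen N τ i := by
  have hlen : towerLen N τ i = Nat.find (exists_eldest_ne hi hne) := dif_pos ⟨hi, hne⟩
  obtain ⟨n, rfl⟩ : ∃ n : ℕ, k = τ i + n := ⟨(k - τ i).toNat, by omega⟩
  rw [hlen]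
  constructor
  · intro h
    by_contra hge
    exact eldest_ne_of_le hi (by omega) (by omega) (Nat.find_spec (exists_eldest_ne hi hne)) h
  · intro h
    simpa using Nat.find_min (exists_eldest_ne hi hne) (show n < _ by omega)

lemma add_towerLen_le_tauMax (hi : i ≤ N) : τ i + towerLen N τ i ≤ tauMax N τ := by
  by_cases hne : i = iMin N τ
  · simpa [hne, towerLen_iMin] using le_tauMax (N := N) (τ := τ) iMin_le
  · by_contra! hlt
    have h := (eldest_eq_self_iff hi hne (le_tauMax hi)).2 hlt
    exact hne (h ▸ eldest_of_tauMax_le hi le_rfl)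

lemma joined_absorber (hi : i ≤ N) : Joined N τ (τ i + towerLen N τ i) i (absorber N τ i) :=
  joined_eldest hi (by omega)

lemma absorber_le (hi : i ≤ N) : absorber N τ i ≤ N := (joined_absorber hi).2.1

lemma key_absorber_lt (hi : i ≤ N) (hne : i ≠ iMin N τ) :
    key τ (absorber N τ i) < key τ i :=
  key_eldest_lt hi (by omega) fun h => (lt_irrefl _) ((eldest_eq_self_iff hi hne (by omega)).1 h)

lemma tau_absorber_le (hi : i ≤ N) (hne : i ≠ iMin N τ) : τ (absorber N τ i) ≤ τ i :=
  tau_le_of_key_le (key_absorber_lt hi hne).le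

variable (N τ) in
def elderCount (c : ℕ) : ℕ := #{a ∈ range (N + 1) | key τ a < key τ c}

lemma elderCount_lt {a : ℕ} (ha : a ≤ N) (h : key τ a < key τ c) :
    elderCount N τ a < elderCount N τ c := by
  refine card_lt_card ((ssubset_iff_of_subset fun x hx => ?_).2 ⟨a, ?_, ?_⟩)
  · simp only [mem_filter] at hx ⊢
    exact ⟨hx.1, hx.2.trans h⟩
  · exact mem_filter.2 ⟨mem_range.2 (by omega), h⟩
  · simp

variable (N τ) in
/-- The next index on the chain from `c` down to `iMin` at level `k`. -/
def parent (k : ℤ) (c : ℕ) : ℕ := eldest N τ k (absorber N τ c)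

lemma IsEldest.isEldest_parent (hc : IsEldest N τ k c) (hne : c ≠ iMin N τ) :
    IsEldest N τ k (parent N τ k c) :=
  isEldest_eldest (absorber_le hc.le) ((tau_absorber_le hc.le hne).trans hc.tau_le)

lemma IsEldest.key_parent_lt (hc : IsEldest N τ k c) (hne : c ≠ iMin N τ) :
    key τ (parent N τ k c) < key τ c :=
  (key_eldest_le (Joined.refl (absorber_le hc.le)
    ((tau_absorber_le hc.le hne).trans hc.tau_le))).trans_lt (key_absorber_lt hc.le hne)

lemma IsEldest.elderCount_parent_lt (hc : IsEldest N τ k c) (hne : c ≠ iMin N τ) :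
    elderCount N τ (parent N τ k c) < elderCount N τ c :=
  elderCount_lt (hc.isEldest_parent hne).le (hc.key_parent_lt hne)

open Classical in
variable (N τ) in
def chainSum (D : ℕ → TPlus) (k : ℤ) (c : ℕ) : ℤ :=
  if _ : IsEldest N τ k c ∧ c ≠ iMin N τ then
    D c (k - τ c).toNat + chainSum D k (parent N τ k c)
  else 0
termination_by elderCount N τ c
decreasing_by
  exact (‹IsEldest N τ k c ∧ c ≠ iMin N τ›).1.elderCount_parent_lt
    (‹IsEldest N τ k c ∧ c ≠ iMin N τ›).2

lemma chainSum_of_isEldest {D : ℕ → TPlus} (hc : IsEldest N τ k c) (hne : c ≠ iMin N τ) :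
    chainSum N τ D k c = D c (k - τ c).toNat + chainSum N τ D k (parent N τ k c) := by
  rw [chainSum, dif_pos ⟨hc, hne⟩]

lemma chainSum_iMin {D : ℕ → TPlus} : chainSum N τ D k (iMin N τ) = 0 := by
  rw [chainSum, dif_neg (by simp)]

lemma exists_ne_zero_of_chainSum_ne_zero {D : ℕ → TPlus} {c : ℕ}
    (h : chainSum N τ D k c ≠ 0) : ∃ j, τ j ≤ k ∧ D j (k - τ j).toNat ≠ 0 := by
  rw [chainSum] at h
  split_ifs at h with hc
  · by_cases hD : D c (k - τ c).toNat = 0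
    · rw [hD, zero_add] at h
      exact exists_ne_zero_of_chainSum_ne_zero h
    · exact ⟨c, hc.1.tau_le, hD⟩
  · exact absurd rfl h
termination_by elderCount N τ c
decreasing_by exact hc.1.elderCount_parent_lt hc.2

variable (τ) in
def IsLeftEnd (k : ℤ) (l : ℕ) : Prop := τ l ≤ k ∧ (l = 0 ∨ k < τ (l - 1))

variable (N τ) in
def leftEnd (k : ℤ) (c : ℕ) : ℕ := sInf {j | Joined N τ k j c}

lemma joined_leftEnd (hc : c ≤ N) (hk : τ c ≤ k) : Joined N τ k (leftEnd N τ k c) c :=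
  Nat.sInf_mem (s := {j | Joined N τ k j c}) ⟨c, Joined.refl hc hk⟩

lemma IsLeftEnd.le_of_joined {l : ℕ} (hl : IsLeftEnd τ k l) (h : Joined N τ k j l) :
    l ≤ j := by
  by_contra! hjl
  rcases hl.2 with hl0 | hlt
  · omega
  · exact absurd (h.2.2 (l - 1) (mem_Icc.2 (by omega))) (not_le.2 hlt)

lemma isLeftEnd_leftEnd (hc : c ≤ N) (hk : τ c ≤ k) : IsLeftEnd τ k (leftEnd N τ k c) := by
  have h := joined_leftEnd hc hk
  refine ⟨h.tau_left_le, or_iff_not_imp_left.2 fun hl0 => not_le.1 fun hle => ?_⟩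
  have hstep : Joined N τ k (leftEnd N τ k c - 1) (leftEnd N τ k c) :=
    ⟨by have := h.1; omega, h.1, fun x hx => by
      rw [mem_Icc] at hx
      rcases (by omega : x = leftEnd N τ k c - 1 ∨ x = leftEnd N τ k c) with rfl | rfl
      · exact hle
      · exact h.tau_left_le⟩
  have : leftEnd N τ k c ≤ leftEnd N τ k c - 1 :=
    Nat.sInf_le (s := {j | Joined N τ k j c}) (hstep.trans h)
  omega

lemma leftEnd_eq_self {l : ℕ} (hlN : l ≤ N) (hl : IsLeftEnd τ k l) : leftEnd N τ k l = l :=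
  le_antisymm (Nat.sInf_le (Joined.refl hlN hl.1)) (hl.le_of_joined (joined_leftEnd hlN hl.1))

lemma leftEnd_eq_of_joined (h : Joined N τ k i j) : leftEnd N τ k i = leftEnd N τ k j := by
  simp only [leftEnd]
  congr 1
  ext x
  exact ⟨fun hx => hx.trans h, fun hx => hx.trans h.symm⟩

section Counting

open Classical

/-- Components at level `k` are counted both by their eldest and by their leftmost index. -/
lemma card_isEldest_eq_card_isLeftEnd (k : ℤ) :
    #{c ∈ range (N + 1) | IsEldest N τ k c} = #{l ∈ range (N + 1) | IsLeftEnd τ k l} := by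
  refine card_nbij' (leftEnd N τ k) (eldest N τ k) ?_ ?_ ?_ ?_
  · intro c hc
    simp only [coe_filter, mem_range, Set.mem_ofPred_eq] at hc ⊢
    exact ⟨Nat.lt_succ_of_le (joined_leftEnd hc.2.le hc.2.tau_le).1,
      isLeftEnd_leftEnd hc.2.le hc.2.tau_le⟩
  · intro l hl
    simp only [coe_filter, mem_range, Set.mem_ofPred_eq] at hl ⊢
    have h := isEldest_eldest (N := N) (Nat.le_of_lt_succ hl.1) hl.2.1
    exact ⟨Nat.lt_succ_of_le h.le, h⟩
  · intro c hc
    simp only [coe_filter, mem_range, Set.mem_ofPred_eq] at hc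
    rw [eldest_eq_of_joined (joined_leftEnd hc.2.le hc.2.tau_le), hc.2.eldest_eq]
  · intro l hl
    simp only [coe_filter, mem_range, Set.mem_ofPred_eq] at hl
    rw [← leftEnd_eq_of_joined (joined_eldest (Nat.le_of_lt_succ hl.1) hl.2.1),
      leftEnd_eq_self (Nat.le_of_lt_succ hl.1) hl.2]

lemma card_isEldest_ne_iMin (hk : τ (iMin N τ) ≤ k) :
    (#{c ∈ range (N + 1) | IsEldest N τ k c ∧ c ≠ iMin N τ} : ℤ) =
      #{l ∈ range (N + 1) | IsLeftEnd τ k l} - 1 := by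
  have hmem : iMin N τ ∈ ({c ∈ range (N + 1) | IsEldest N τ k c} : Finset ℕ) :=
    mem_filter.2 ⟨mem_range.2 (Nat.lt_succ_of_le iMin_le), isEldest_iMin hk⟩
  have herase : {c ∈ range (N + 1) | IsEldest N τ k c ∧ c ≠ iMin N τ} =
      ({c ∈ range (N + 1) | IsEldest N τ k c} : Finset ℕ).erase (iMin N τ) := by
    ext c
    simp only [mem_filter, mem_erase]
    tauto
  rw [← card_isEldest_eq_card_isLeftEnd, herase, ← card_erase_add_one hmem]
  push_cast
  ring

lemma towerLen_eq_card (hi : i ≤ N) :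
    (towerLen N τ i : ℤ) =
      #{k ∈ Ico (τ (iMin N τ)) (tauMax N τ) | IsEldest N τ k i ∧ i ≠ iMin N τ} := by
  by_cases hne : i = iMin N τ
  · simp [hne, towerLen_iMin]
  · rw [card_filter_Ico_eq_max (tau_iMin_le hi) (add_towerLen_le_tauMax hi) fun k _ _ => ?_]
    · omega
    · refine ⟨fun h => ⟨h.1.tau_le, (eldest_eq_self_iff hi hne h.1.tau_le).1 h.1.eldest_eq⟩,
        fun h => ⟨⟨hi, h.1, (eldest_eq_self_iff hi hne h.1).2 h.2⟩, hne⟩⟩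

lemma card_isLeftEnd_zero :
    (#{k ∈ Ico (τ (iMin N τ)) (tauMax N τ) | IsLeftEnd τ k 0} : ℤ) =
      tauMax N τ - τ 0 := by
  rw [card_filter_Ico_eq_max (tau_iMin_le (Nat.zero_le N)) le_rfl fun k _ hk => ?_]
  · have := le_tauMax (N := N) (τ := τ) (Nat.zero_le N)
    omega
  · simp [IsLeftEnd, hk]

lemma card_isLeftEnd_succ (hi : i < N) :
    (#{k ∈ Ico (τ (iMin N τ)) (tauMax N τ) | IsLeftEnd τ k (i + 1)} : ℤ) =
      max (τ i - τ (i + 1)) 0 := by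
  rw [card_filter_Ico_eq_max (tau_iMin_le hi) (le_tauMax hi.le) fun k _ _ => ?_]
  simp [IsLeftEnd]

end Counting

lemma sum_towerLens :
    ∑ i, (towerLens N τ i : ℤ) =
      τ (iMin N τ) - τ 0 + ∑ i ∈ range N, max (τ i - τ (i + 1)) 0 := by
  classical
  unfold towerLens
  rw [Fin.sum_univ_eq_sum_range (fun i => (towerLen N τ i : ℤ))]
  set L := Ico (τ (iMin N τ)) (tauMax N τ)
  have hm := tau_iMin_le (N := N) (τ := τ) (Nat.zero_le N)
  have hK := le_tauMax (N := N) (τ := τ) (Nat.zero_le N)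
  calc ∑ i ∈ range (N + 1), (towerLen N τ i : ℤ)
      = ∑ i ∈ range (N + 1), ∑ k ∈ L,
          if IsEldest N τ k i ∧ i ≠ iMin N τ then (1 : ℤ) else 0 :=
        sum_congr rfl fun i hi => by
          rw [towerLen_eq_card (Nat.le_of_lt_succ (mem_range.1 hi)), sum_boole]
    _ = ∑ k ∈ L, ((#{l ∈ range (N + 1) | IsLeftEnd τ k l} : ℤ) - 1) := by
        rw [sum_comm]
        exact sum_congr rfl fun k hk => by
          rw [sum_boole, card_isEldest_ne_iMin (mem_Ico.1 hk).1]
    _ = ∑ l ∈ range (N + 1), (#{k ∈ L | IsLeftEnd τ k l} : ℤ) - #L := by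
        simp only [sum_sub_distrib, ← sum_boole, sum_const, nsmul_one]
        rw [sum_comm]
    _ = τ (iMin N τ) - τ 0 + ∑ i ∈ range N, max (τ i - τ (i + 1)) 0 := by
        rw [sum_range_succ', card_isLeftEnd_zero, Int.card_Ico,
          sum_congr rfl fun i hi => card_isLeftEnd_succ (mem_range.1 hi)]
        omega

variable {φ ψ : RootV N τ → TPlus}

/-- The coefficient of `U⁰` in `φ (v_i^k)`, and `0` when `v_i^k` does not exist. -/
def val (φ : RootV N τ → TPlus) (i : ℕ) (k : ℤ) : ℤ :=
  if h : i ≤ N ∧ τ i ≤ k then φ (rootMk N τ i k h.1 h.2) 0 else 0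

lemma val_rootMk (hi : i ≤ N) (hk : τ i ≤ k) : val φ i k = φ (rootMk N τ i k hi hk) 0 :=
  dif_pos ⟨hi, hk⟩

lemma le_and_le_of_val_ne_zero (hv : val φ i k ≠ 0) : i ≤ N ∧ τ i ≤ k := by
  by_contra h
  exact hv (dif_neg h)

@[simp]
lemma val_add : val (φ + ψ) i k = val φ i k + val ψ i k := by
  unfold val; split_ifs <;> simp

@[simp]
lemma val_smul (a : ℤ) : val (a • φ) i k = a * val φ i k := by
  unfold val; split_ifs <;> simp

lemma rootMk_eq_of_joined (h : Joined N τ k i j) :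
    rootMk N τ i k h.1 h.tau_left_le = rootMk N τ j k h.2.1 h.tau_right_le :=
  Quotient.sound ⟨rfl, fun l hl => h.2.2 l (mem_Icc.2 (by simp only at hl; omega))⟩

lemma val_eq_of_joined (h : Joined N τ k i j) : val φ i k = val φ j k := by
  rw [val_rootMk h.1 h.tau_left_le, val_rootMk h.2.1 h.tau_right_le, rootMk_eq_of_joined h]

lemma val_eldest (hi : i ≤ N) (hk : τ i ≤ k) : val φ (eldest N τ k i) k = val φ i k :=
  (val_eq_of_joined (joined_eldest hi hk)).symm

lemma apply_rootMk_eq_val (hφ : φ ∈ Hmod (rootAdj N τ) (rootχ N τ)) (n : ℕ) (hi : i ≤ N)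
    (hk : τ i ≤ k) : φ (rootMk N τ i k hi hk) n = val φ i (k + n) := by
  induction n generalizing k with
  | zero => simp [val_rootMk hi hk]
  | succ n ih =>
    have hstep : shiftU (φ (rootMk N τ i k hi hk)) = φ (rootMk N τ i (k + 1) hi (by omega)) :=
      hφ _ _ (Or.inl ⟨⟨(i, k), hi, hk⟩, rfl, rfl⟩) (show k < k + 1 by omega)
    rw [← shiftU_apply, hstep, ih]
    push_cast; ring_nf

lemma val_HU (φ : Hmod (rootAdj N τ) (rootχ N τ)) (hi : i ≤ N) (hk : τ i ≤ k) :
    val (HU (rootAdj N τ) (rootχ N τ) φ).1 i k = val φ.1 i (k + 1) := by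
  rw [val_rootMk hi hk]
  exact_mod_cast apply_rootMk_eq_val φ.2 1 hi hk

def tower (φ : RootV N τ → TPlus) (i : ℕ) : TPlus :=
  Finsupp.onFinset (range (towerLen N τ i))
    (fun h => if h < towerLen N τ i then
      val φ i (τ i + h) - val φ (absorber N τ i) (τ i + h) else 0)
    (fun h hne => mem_range.2 (by by_contra hge; exact hne (if_neg hge)))

lemma tower_apply (i h : ℕ) : tower φ i h = if h < towerLen N τ i then
    val φ i (τ i + h) - val φ (absorber N τ i) (τ i + h) else 0 := rfl

lemma tower_mem (φ : RootV N τ → TPlus) (i : ℕ) : tower φ i ∈ Tower (towerLen N τ i) :=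
  fun h hh => by rw [tower_apply, if_neg (by omega)]

lemma tower_of_lt (hi : N < i) : tower φ i = 0 := by
  ext h
  rw [tower_apply, towerLen_of_lt hi, if_neg (Nat.not_lt_zero h)]
  rfl

lemma tower_add : tower (φ + ψ) i = tower φ i + tower ψ i := by
  ext h; simp only [tower_apply, val_add, Finsupp.add_apply]; split_ifs <;> ring

lemma tower_smul (a : ℤ) : tower (a • φ) i = a • tower φ i := by
  ext h; simp only [tower_apply, val_smul, Finsupp.smul_apply, smul_eq_mul]; split_ifs <;> ring

/-- The values on the chain of eldest indices telescope. -/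
lemma val_eq_add_chainSum (φ : RootV N τ → TPlus) {c : ℕ} (hc : IsEldest N τ k c) :
    val φ c k = val φ (iMin N τ) k + chainSum N τ (tower φ) k c := by
  by_cases hne : c = iMin N τ
  · rw [hne, chainSum_iMin, add_zero]
  · have hlt := (eldest_eq_self_iff hc.le hne hc.tau_le).1 hc.eldest_eq
    have hk := hc.tau_le
    have htower : tower φ c (k - τ c).toNat = val φ c k - val φ (parent N τ k c) k := by
      rw [tower_apply, if_pos (by omega), show τ c + ((k - τ c).toNat : ℤ) = k by omega, parent,
        val_eldest (absorber_le hc.le) ((tau_absorber_le hc.le hne).trans hc.tau_le)]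
    rw [chainSum_of_isEldest hc hne, htower, val_eq_add_chainSum φ (hc.isEldest_parent hne)]
    ring
termination_by elderCount N τ c
decreasing_by exact hc.elderCount_parent_lt hne

variable (N τ) in
def decompose : Hmod (rootAdj N τ) (rootχ N τ) →ₗ[ℤ] Targ (towerLens N τ) where
  toFun φ := (φ.1 (rootMk N τ (iMin N τ) (τ (iMin N τ)) iMin_le le_rfl),
    fun i => ⟨tower φ.1 i, tower_mem φ.1 i⟩)
  map_add' _ _ := Prod.ext rfl (funext fun _ => Subtype.ext tower_add)
  map_smul' a _ := Prod.ext rfl (funext fun _ => Subtype.ext (tower_smul a))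

lemma decompose_fst (φ : Hmod (rootAdj N τ) (rootχ N τ)) (n : ℕ) :
    (decompose N τ φ).1 n = val φ.1 (iMin N τ) (τ (iMin N τ) + n) :=
  apply_rootMk_eq_val φ.2 n iMin_le le_rfl

lemma decompose_snd (φ : Hmod (rootAdj N τ) (rootχ N τ)) (i : Fin (N + 1)) :
    ((decompose N τ φ).2 i : TPlus) = tower φ.1 i := rfl

variable (x : Targ (towerLens N τ))

def towerData (j : ℕ) : TPlus := if h : j < N + 1 then x.2 ⟨j, h⟩ else 0

lemma towerData_decompose (φ : Hmod (rootAdj N τ) (rootχ N τ)) :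
    towerData (decompose N τ φ) = tower φ.1 := by
  funext j
  unfold towerData
  split_ifs with h
  · rfl
  · exact (tower_of_lt (by omega)).symm

/-- The value at `v_i^k` of the preimage of `x`, read off `val_eq_add_chainSum`. -/
def assembleVal (i : ℕ) (k : ℤ) : ℤ :=
  x.1 (k - τ (iMin N τ)).toNat + chainSum N τ (towerData x) k (eldest N τ k i)

lemma assembleVal_eq_zero (hi : i ≤ N) (hk : tauMax N τ ≤ k)
    (hP : x.1.support.sup id < (k - τ (iMin N τ)).toNat) : assembleVal x i k = 0 := by
  rw [assembleVal, eldest_of_tauMax_le hi hk, chainSum_iMin, add_zero,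
    ← Finsupp.notMem_support_iff]
  exact fun hmem => (le_sup (f := id) hmem).not_gt hP

def assembleAt (v : RootVpre N τ) : TPlus :=
  Finsupp.onFinset (range ((tauMax N τ - v.1.2).toNat + x.1.support.sup id + 1))
    (fun h => assembleVal x v.1.1 (v.1.2 + h))
    (fun h hne => mem_range.2 (by
      by_contra hge
      have := tau_iMin_le (N := N) (τ := τ) v.2.1
      have := v.2.2
      exact hne (assembleVal_eq_zero x v.2.1 (by omega) (by omega))))

def assemble : RootV N τ → TPlus :=
  Quotient.lift (assembleAt x) fun u w huw => by
    ext h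
    have hjoined : Joined N τ (u.1.2 + h) u.1.1 w.1.1 :=
      ⟨u.2.1, w.2.1, fun l hl => by
        have := huw.2 l (by rw [mem_Icc] at hl; omega)
        omega⟩
    simp only [assembleAt, Finsupp.onFinset_apply, assembleVal, ← huw.1,
      eldest_eq_of_joined hjoined]

lemma assemble_rootMk (hi : i ≤ N) (hk : τ i ≤ k) (n : ℕ) :
    assemble x (rootMk N τ i k hi hk) n = assembleVal x i (k + n) := rfl

lemma assemble_mem : assemble x ∈ Hmod (rootAdj N τ) (rootχ N τ) := by
  rintro _ _ (⟨u, rfl, rfl⟩ | ⟨u, rfl, rfl⟩) hlt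
  · ext h
    simp only [shiftU_apply]
    exact congrArg (assembleVal x u.1.1) (by simp only [rootStep]; push_cast; ring)
  · exact absurd hlt (not_lt.2 (show u.1.2 ≤ u.1.2 + 1 by omega))

lemma val_assemble (hi : i ≤ N) (hk : τ i ≤ k) : val (assemble x) i k = assembleVal x i k := by
  rw [val_rootMk hi hk, assemble_rootMk, Nat.cast_zero, add_zero]

lemma decompose_assemble : decompose N τ ⟨assemble x, assemble_mem x⟩ = x := by
  refine Prod.ext (Finsupp.ext fun n => ?_) (funext fun i => Subtype.ext (Finsupp.ext fun h => ?_))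
  · rw [decompose_fst, val_assemble x iMin_le (by omega), assembleVal,
      (isEldest_iMin (by omega)).eldest_eq, chainSum_iMin, add_zero]
    congr 1
    omega
  · have hi : (i : ℕ) ≤ N := Nat.le_of_lt_succ i.2
    rw [decompose_snd, tower_apply]
    split_ifs with hlt
    · have hne := ne_iMin_of_lt_towerLen hlt
      have hc : IsEldest N τ (τ i + h) i :=
        ⟨hi, by omega, (eldest_eq_self_iff hi hne (by omega)).2 (by omega)⟩
      have hτ := (tau_absorber_le hi hne).trans hc.tau_le
      rw [val_assemble x hi hc.tau_le, val_assemble x (absorber_le hi) hτ, assembleVal,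
        assembleVal, hc.eldest_eq, chainSum_of_isEldest hc hne, towerData, dif_pos i.2]
      simp [parent]
    · exact ((x.2 i).2 h (not_lt.1 hlt)).symm

lemma assemble_decompose (φ : Hmod (rootAdj N τ) (rootχ N τ)) :
    assemble (decompose N τ φ) = φ.1 := by
  funext v
  induction v using Quotient.inductionOn with | h u => ?_
  ext h
  have hk : τ u.1.1 ≤ u.1.2 + h := by have := u.2.2; omega
  have hval := val_eq_add_chainSum φ.1 (isEldest_eldest u.2.1 hk)
  have hm : τ (iMin N τ) ≤ u.1.2 + h := (tau_iMin_le u.2.1).trans hk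
  rw [val_eldest u.2.1 hk] at hval
  change assemble _ (rootMk N τ u.1.1 u.1.2 u.2.1 u.2.2) h =
    φ.1 (rootMk N τ u.1.1 u.1.2 u.2.1 u.2.2) h
  rw [assemble_rootMk, apply_rootMk_eq_val φ.2, assembleVal, towerData_decompose, decompose_fst,
    hval, show τ (iMin N τ) + ((u.1.2 + h - τ (iMin N τ)).toNat : ℤ) = u.1.2 + h by omega]

variable (N τ) in
def decomposeEquiv : Hmod (rootAdj N τ) (rootχ N τ) ≃ₗ[ℤ] Targ (towerLens N τ) :=
  { decompose N τ with
    invFun := fun x => ⟨assemble x, assemble_mem x⟩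
    left_inv := fun φ => Subtype.ext (assemble_decompose φ)
    right_inv := decompose_assemble }

lemma decompose_HU (φ : Hmod (rootAdj N τ) (rootχ N τ)) :
    decompose N τ (HU (rootAdj N τ) (rootχ N τ) φ) =
      TargU (towerLens N τ) (decompose N τ φ) := by
  refine Prod.ext rfl (funext fun i => Subtype.ext (Finsupp.ext fun h => ?_))
  change tower _ i h = shiftU (tower φ.1 i) h
  have hi : (i : ℕ) ≤ N := Nat.le_of_lt_succ i.2
  rw [shiftU_apply, tower_apply, tower_apply]
  split_ifs with hlt hlt' hlt'
  · have hne := ne_iMin_of_lt_towerLen hlt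
    rw [val_HU φ hi (by omega),
      val_HU φ (absorber_le hi) ((tau_absorber_le hi hne).trans (by omega))]
    push_cast; ring_nf
  · -- at the top of its tower the branch of `i` merges into that of its absorber
    have hne := ne_iMin_of_lt_towerLen hlt
    rw [val_HU φ hi (by omega),
      val_HU φ (absorber_le hi) ((tau_absorber_le hi hne).trans (by omega)),
      show τ i + (h : ℤ) + 1 = τ i + towerLen N τ i by omega,
      val_eq_of_joined (joined_absorber hi), sub_self]
  · omega
  · rfl

lemma hhomog_iff (φ : Hmod (rootAdj N τ) (rootχ N τ)) (d : ℚ) :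
    HHomog (rootχ N τ) 0 d φ.1 ↔ ∀ i k, val φ.1 i k ≠ 0 → 2 * (k : ℚ) = d := by
  constructor
  · intro H i k hv
    obtain ⟨hi, hk⟩ := le_and_le_of_val_ne_zero hv
    have := H _ 0 (by rwa [val_rootMk hi hk] at hv)
    change 2 * (0 : ℚ) + (2 * (k : ℚ) + 0) = d at this
    linarith
  · intro H v
    induction v using Quotient.inductionOn with | h u => ?_
    intro h hne
    change φ.1 (rootMk N τ u.1.1 u.1.2 u.2.1 u.2.2) h ≠ 0 at hne
    rw [apply_rootMk_eq_val φ.2] at hne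
    have := H _ _ hne
    change 2 * (h : ℚ) + (2 * (u.1.2 : ℚ) + 0) = d
    push_cast at this
    linarith

variable (N τ) in
def towerGrading : Fin (N + 1) → ℚ := fun i => 2 * (τ i : ℚ)

lemma targHomog_decompose {φ : Hmod (rootAdj N τ) (rootχ N τ)} {d : ℚ}
    (hφ : HHomog (rootχ N τ) 0 d φ.1) :
    TargHomog (2 * (τ (iMin N τ) : ℚ)) (towerGrading N τ) d (decompose N τ φ) := by
  rw [hhomog_iff] at hφ
  refine ⟨fun n hn => ?_, fun i h hne => ?_⟩
  · rw [decompose_fst] at hn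
    have := hφ _ _ hn
    push_cast at this
    linarith
  · rw [decompose_snd, tower_apply] at hne
    split_ifs at hne
    · have hk : 2 * ((τ i + h : ℤ) : ℚ) = d := by
        by_cases hv : val φ.1 i (τ i + h) = 0
        · exact hφ _ _ fun h' => hne (by rw [hv, h', sub_zero])
        · exact hφ _ _ hv
      change 2 * (h : ℚ) + 2 * (τ i : ℚ) = d
      push_cast at hk
      linarith
    · exact absurd rfl hne

lemma hhomog_of_targHomog {φ : Hmod (rootAdj N τ) (rootχ N τ)} {d : ℚ}
    (hT : TargHomog (2 * (τ (iMin N τ) : ℚ)) (towerGrading N τ) d (decompose N τ φ)) :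
    HHomog (rootχ N τ) 0 d φ.1 := by
  rw [hhomog_iff]
  intro i k hv
  have hik := le_and_le_of_val_ne_zero hv
  have hm : τ (iMin N τ) ≤ k := (tau_iMin_le hik.1).trans hik.2
  have hbase : val φ.1 (iMin N τ) k = (decompose N τ φ).1 (k - τ (iMin N τ)).toNat := by
    rw [decompose_fst, show τ (iMin N τ) + ((k - τ (iMin N τ)).toNat : ℤ) = k by omega]
  rw [← val_eldest hik.1 hik.2, val_eq_add_chainSum φ.1 (isEldest_eldest hik.1 hik.2), hbase] at hv
  by_cases hP : (decompose N τ φ).1 (k - τ (iMin N τ)).toNat = 0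
  · rw [hP, zero_add] at hv
    obtain ⟨j, hjk, hj⟩ := exists_ne_zero_of_chainSum_ne_zero hv
    have hjN : j < N + 1 := by
      by_contra hjN
      exact hj (by rw [tower_of_lt (by omega)]; rfl)
    have := hT.2 ⟨j, hjN⟩ _ hj
    rw [Int.natCast_toNat_sub_of_le hjk] at this
    change _ + 2 * (τ j : ℚ) = d at this
    linarith
  · have := hT.1 _ hP
    rw [Int.natCast_toNat_sub_of_le hm] at this
    linarith

lemma tau_iMin_le_rootχ (v : RootV N τ) : τ (iMin N τ) ≤ rootχ N τ v := by
  induction v using Quotient.inductionOn with | h u => exact (tau_iMin_le u.2.1).trans u.2.2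

lemma tau_iMin_eq_inf' : τ (iMin N τ) = (range (N + 1)).inf' ⟨0, by simp⟩ τ :=
  le_antisymm (le_inf' _ _ fun _ hj => tau_iMin_le (Nat.le_of_lt_succ (mem_range.1 hj)))
    (inf'_le _ (mem_range.2 (Nat.lt_succ_of_le iMin_le)))

end RootTau

end

open Finset in
/-- (Corollary 2.10 / (3.8) of [OSzINV].)  For
`τ : {0,…,T₀} → ℤ` with `τ(1) > τ(0) = 0`, the module `ℍ(R_τ,χ_τ)`
decomposes as `T⁺_{2m} ⊕ ℍ_red(R_τ,χ_τ)` (a graded `ℤ[U]`-module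
isomorphism), where `m = min_i τ(i) = min_v χ_τ(v)` and the `ℤ`-rank of
the finite part `ℍ_red` is `min_i τ(i) + Σ_{i=0}^{T₀−1} max(τ(i)−τ(i+1),0)`. -/
theorem rank_Hred_of_tau
    (T0 : ℕ) (τ : ℕ → ℤ) (hτ0 : τ 0 = 0)
    (m : ℤ) (hm : m = (Finset.range (T0 + 1)).inf' ⟨0, by simp⟩ τ) :
    ∃ (n : ℕ) (rI : Fin n → ℚ) (len : Fin n → ℕ)
      (e : Hmod (rootAdj T0 τ) (rootχ T0 τ) ≃ₗ[ℤ] Targ len),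
      (∀ φ, e (HU (rootAdj T0 τ) (rootχ T0 τ) φ) = TargU len (e φ))
      ∧ (∀ (d : ℚ) (φ : Hmod (rootAdj T0 τ) (rootχ T0 τ)),
          HHomog (rootχ T0 τ) 0 d φ.1 ↔ TargHomog (2 * (m : ℚ)) rI d (e φ))
      ∧ (∑ j : Fin n, (len j : ℤ))
          = m + ∑ i ∈ Finset.range T0, max (τ i - τ (i + 1)) 0
      ∧ (∀ v : RootV T0 τ, m ≤ rootχ T0 τ v)
      ∧ (∃ v : RootV T0 τ, rootχ T0 τ v = m) := by
  obtain rfl : m = τ (RootTau.iMin T0 τ) := hm.trans RootTau.tau_iMin_eq_inf'.symm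
  open RootTau in
  exact ⟨T0 + 1, towerGrading T0 τ, towerLens T0 τ, decomposeEquiv T0 τ, decompose_HU,
    fun _ _ => ⟨targHomog_decompose, hhomog_of_targHomog⟩, by rw [sum_towerLens, hτ0, sub_zero],
    tau_iMin_le_rootχ, ⟨rootMk T0 τ (iMin T0 τ) _ iMin_le le_rfl, rfl⟩⟩
end

section
/- Let J be a finite index set with a distinguished element 0, let L be the free ℤ-module with basis {b_j}_{j∈J}, and let (·,·) be a negative definite symmetric bilinear form on L. For x = Σ_j r_j b_j write pr_0(x) := r_0, and order L coefficientwise (x ≤ y iff every coefficient of x is ≤ the corresponding coefficient of y). Suppose Z_f ∈ L satisfies (Z_f, b_0) = −1 and (Z_f, b_j) = 0 for all j ≠ 0, and set m_f := pr_0(Z_f). For i ∈ ℕ let S_i := {y ∈ L : pr_0(y) = i and (y, b_j) ≤ 0 for all j ≠ 0}. Then for any integers t ≥ 0 and i_0 ≥ 0: if y₀ is a minimal element of the partially ordered set (S_{i_0}, ≤), then t·Z_f + y₀ belongs to S_{t·m_f + i_0} and is a minimal element of (S_{t·m_f + i_0}, ≤). -/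
/-- Let `L` be the lattice with basis `{b_j}_{j∈J}`, with a
negative definite symmetric bilinear form, `Z_f` with `(Z_f,b_0) = −1` and
`(Z_f,b_j) = 0` for `j ≠ 0`, `m_f = pr_0(Z_f)`, and
`S_i = {y : pr_0(y) = i, (y,b_j) ≤ 0 ∀ j ≠ 0}`.  If `y₀` is a minimal element
of `(S_{i₀}, ≤)` (coefficientwise order) then `t·Z_f + y₀` is a minimal element
of `(S_{t·m_f + i₀}, ≤)` for every `t ≥ 0`, `i₀ ≥ 0`. -/
theorem minimal_cycles_add_Zf
    (J : Type) [Fintype J] [DecidableEq J] (j0 : J)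
    (B : (J → ℤ) → (J → ℤ) → ℤ)
    (hBadd : ∀ x y z : J → ℤ, B (x + y) z = B x z + B y z)
    (hBsmul : ∀ (c : ℤ) (x y : J → ℤ), B (c • x) y = c * B x y)
    (hBsymm : ∀ x y : J → ℤ, B x y = B y x)
    (hBneg : ∀ x : J → ℤ, x ≠ 0 → B x x < 0)
    (Zf : J → ℤ)
    (hZf0 : B Zf (Pi.single j0 1) = -1)
    (hZfj : ∀ j : J, j ≠ j0 → B Zf (Pi.single j 1) = 0)
    (mf : ℤ) (hmf : mf = Zf j0)
    (S : ℤ → Set (J → ℤ))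
    (hS : ∀ i : ℤ, S i = {y : J → ℤ | y j0 = i ∧ ∀ j : J, j ≠ j0 → B y (Pi.single j 1) ≤ 0})
    (t i0 : ℤ) (ht : 0 ≤ t) (hi0 : 0 ≤ i0)
    (y0 : J → ℤ) (hy0 : y0 ∈ S i0)
    (hy0min : ∀ y ∈ S i0, y ≤ y0 → y = y0) :
    t • Zf + y0 ∈ S (t * mf + i0)
      ∧ ∀ y ∈ S (t * mf + i0), y ≤ t • Zf + y0 → y = t • Zf + y0 := by
  rw [hS] at hy0 ⊢
  obtain ⟨hy0j0, hy0B⟩ := hy0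
  constructor
  · refine ⟨?_, ?_⟩
    · simp [hmf, hy0j0, mul_comm]
    · intro j hj
      rw [hBadd, hBsmul, hZfj j hj]
      simpa using hy0B j hj
  · intro y hy hle
    obtain ⟨hyj0, hyB⟩ := hy
    set z : J → ℤ := y - t • Zf with hz
    have hyz : y = z + t • Zf := by simp [hz]
    have hzS : z ∈ S i0 := by
      rw [hS]
      refine ⟨?_, ?_⟩
      · simp [hz, hyj0, hmf, mul_comm]
      · intro j hj
        have := hyB j hj
        rw [hyz, hBadd, hBsmul, hZfj j hj] at this
        linarith
    have hzle : z ≤ y0 := by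
      intro j
      have := hle j
      simp only [hz, Pi.sub_apply, Pi.add_apply] at this ⊢
      linarith [hle j]
    have := hy0min z hzS hzle
    rw [hyz, this]
    abel
end

section
/- Let s ≥ 1 and integers k_1 ≥ 1, k_j ≥ 2 for 2 ≤ j ≤ s, with continuants n_{ij} and p := n_{1s}, q := n_{2s}. Let m ≥ 1 be an integer, let a_1,…,a_s be nonnegative integers satisfying (SI): Σ_{t=i}^{s} n_{t+1,s}·a_t < n_{is} for every 1 ≤ i ≤ s, and set a'_j := Σ_{t=j}^{s} n_{t+1,s}·a_t and a := a'_1. Fix an integer i ≥ 0 and define u_0 := i, u_1 := ⌈(iq − a)/(p + qm)⌉, u_j := ⌈(u_{j−1}·n_{j+1,s} − a'_j)/n_{js}⌉ for 2 ≤ j ≤ s, and u_{s+1} := 0. Then u_j ≥ 0 for all 1 ≤ j ≤ s, and u_{j−1} − c_j·u_j + u_{j+1} ≤ a_j for every 1 ≤ j ≤ s, where c_1 := k_1 + m and c_j := k_j for j ≥ 2. -/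
/-- The continuants `n_{ij}` of the negative continued fraction
`[k_i,…,k_j]`: `n_{i,i−1} = 1`, `n_{ij} = 0` for `j < i−1`, and
`n_{ij} = k_i·n_{i+1,j} − n_{i+2,j}`. -/
def ncont (k : ℕ → ℤ) (i j : ℕ) : ℤ :=
  if j + 1 < i then 0
  else if j + 1 = i then 1
  else k i * ncont k (i + 1) j - ncont k (i + 2) j
termination_by j + 2 - i
decreasing_by all_goals omega

lemma ncont_top (k : ℕ → ℤ) (s : ℕ) : ncont k (s + 1) s = 1 := by
  rw [ncont]; simp

lemma ncont_top2 (k : ℕ → ℤ) (s : ℕ) : ncont k (s + 2) s = 0 := by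
  rw [ncont]; simp

lemma ncont_rec (k : ℕ → ℤ) (s t : ℕ) (h : t ≤ s) :
    ncont k t s = k t * ncont k (t + 1) s - ncont k (t + 2) s := by
  rw [ncont, if_neg (by omega), if_neg (by omega)]

lemma ceil_div_bounds (a b : ℤ) (hb : 0 < b) :
    a ≤ b * ⌈(a:ℚ)/(b:ℚ)⌉ ∧ b * (⌈(a:ℚ)/(b:ℚ)⌉ - 1) < a := by
  have hbq : (0:ℚ) < (b:ℚ) := by exact_mod_cast hb
  constructor
  · have h := Int.le_ceil ((a:ℚ)/(b:ℚ))
    rw [div_le_iff₀ hbq] at h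
    have : (a:ℚ) ≤ ((b * ⌈(a:ℚ)/(b:ℚ)⌉ : ℤ) : ℚ) := by push_cast; linarith
    exact_mod_cast this
  · have h := Int.ceil_lt_add_one ((a:ℚ)/(b:ℚ))
    have h2 : ((⌈(a:ℚ)/(b:ℚ)⌉ : ℚ) - 1) * b < a := by
      rw [← lt_div_iff₀ hbq] at *; linarith
    have : ((b * (⌈(a:ℚ)/(b:ℚ)⌉ - 1) : ℤ) : ℚ) < (a:ℚ) := by push_cast; linarith
    exact_mod_cast this

lemma ncont_pair (k : ℕ → ℤ) (s : ℕ) (hk : ∀ j, 2 ≤ j → j ≤ s → 2 ≤ k j) :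
    ∀ d i, s + 1 - i = d → 2 ≤ i → i ≤ s + 1 →
      0 ≤ ncont k (i + 1) s ∧ ncont k (i + 1) s < ncont k i s := by
  intro d
  induction d with
  | zero =>
    intro i hd h2 h3
    have hi : i = s + 1 := by omega
    subst hi
    rw [show s + 1 + 1 = s + 2 from rfl, ncont_top2, ncont_top]
    exact ⟨le_refl 0, by norm_num⟩
  | succ d ih =>
    intro i hd h2 h3
    have hi : i ≤ s := by omega
    obtain ⟨h0, h1⟩ := ih (i + 1) (by omega) (by omega) (by omega)
    have hrec := ncont_rec k s i hi
    have hki := hk i h2 hi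
    have hpos : 1 ≤ ncont k (i + 1) s := by
      have : ncont k (i + 1 + 1) s < ncont k (i + 1) s := h1
      omega
    refine ⟨by linarith, ?_⟩
    have h2n : 2 * ncont k (i + 1) s ≤ k i * ncont k (i + 1) s :=
      mul_le_mul_of_nonneg_right hki (by linarith)
    have h1' : ncont k (i + 2) s < ncont k (i + 1) s := h1
    linarith

/-- (Proposition 7.5(a) of the paper.)  With
`p = n_{1s}`, `q = n_{2s}`, `(SI)`-data `a_1,…,a_s`, `a'_j = Σ_{t=j}^s n_{t+1,s}a_t`,
`a = a'_1`, and the ceiling-defined `u_j`, one has `u_j ≥ 0` for `1 ≤ j ≤ s`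
and `u_{j−1} − c_j·u_j + u_{j+1} ≤ a_j` for `1 ≤ j ≤ s`, where `c_1 = k_1 + m`
and `c_j = k_j` for `j ≥ 2`. -/
theorem cycle_zi_satisfies_inequalities
    (s : ℕ) (hs : 1 ≤ s) (k : ℕ → ℤ)
    (hk1 : 1 ≤ k 1) (hk : ∀ j, 2 ≤ j → j ≤ s → 2 ≤ k j)
    (m : ℤ) (hm : 1 ≤ m)
    (a : ℕ → ℤ) (ha : ∀ j, 1 ≤ j → j ≤ s → 0 ≤ a j)
    (hSI : ∀ i, 1 ≤ i → i ≤ s →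
      (∑ t ∈ Finset.Icc i s, ncont k (t + 1) s * a t) < ncont k i s)
    (a' : ℕ → ℤ) (ha' : ∀ j, a' j = ∑ t ∈ Finset.Icc j s, ncont k (t + 1) s * a t)
    (i : ℤ) (hi : 0 ≤ i)
    (u : ℕ → ℤ)
    (hu0 : u 0 = i)
    (hu1 : u 1 = ⌈((i * ncont k 2 s - a' 1 : ℤ) : ℚ) /
        ((ncont k 1 s + ncont k 2 s * m : ℤ) : ℚ)⌉)
    (huj : ∀ j, 2 ≤ j → j ≤ s →
      u j = ⌈((u (j - 1) * ncont k (j + 1) s - a' j : ℤ) : ℚ) / ((ncont k j s : ℤ) : ℚ)⌉)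
    (hus : u (s + 1) = 0)
    (c : ℕ → ℤ) (hc1 : c 1 = k 1 + m) (hcj : ∀ j, 2 ≤ j → c j = k j) :
    (∀ j, 1 ≤ j → j ≤ s → 0 ≤ u j)
      ∧ (∀ j, 1 ≤ j → j ≤ s → u (j - 1) - c j * u j + u (j + 1) ≤ a j) := by
  have hpair : ∀ t, 2 ≤ t → t ≤ s + 1 →
      0 ≤ ncont k (t + 1) s ∧ ncont k (t + 1) s < ncont k t s :=
    fun t h1 h2 => ncont_pair k s hk (s + 1 - t) t rfl h1 h2
  have hnpos : ∀ t, 2 ≤ t → t ≤ s + 1 → 1 ≤ ncont k t s := by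
    intro t h1 h2
    obtain ⟨x, y⟩ := hpair t h1 h2; linarith
  have hq : 1 ≤ ncont k 2 s := hnpos 2 le_rfl (by omega)
  have hq0 : (0:ℤ) ≤ ncont k 2 s := by linarith
  have hp : 1 ≤ ncont k 1 s := by
    have h := ncont_rec k s 1 hs
    obtain ⟨h0, h1⟩ := hpair 2 le_rfl (by omega)
    have : 1 * ncont k 2 s ≤ k 1 * ncont k 2 s :=
      mul_le_mul_of_nonneg_right hk1 hq0
    have h2 : ncont k (2 + 1) s = ncont k 3 s := rfl
    have h3 : ncont k (1 + 1) s = ncont k 2 s := rfl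
    have h4 : ncont k (1 + 2) s = ncont k 3 s := rfl
    rw [h2] at h1 h0
    rw [h3, h4] at h
    linarith
  have hqm : (0:ℤ) ≤ ncont k 2 s * m := mul_nonneg hq0 (by linarith)
  have hDpos : 0 < ncont k 1 s + ncont k 2 s * m := by linarith
  have hSI' : ∀ t, 1 ≤ t → t ≤ s → a' t < ncont k t s := by
    intro t h1 h2; rw [ha']; exact hSI t h1 h2
  have ha'top : a' (s + 1) = 0 := by
    rw [ha', Finset.Icc_eq_empty (by omega), Finset.sum_empty]
  have hsplit : ∀ j, 1 ≤ j → j ≤ s → a' j = ncont k (j + 1) s * a j + a' (j + 1) := by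
    intro j h1 h2
    have hins : Finset.Icc j s = insert j (Finset.Icc (j + 1) s) := by
      rw [Finset.Icc_add_one_left_eq_Ioc, Finset.Ioc_insert_left h2]
    rw [ha', ha', hins, Finset.sum_insert (by simp)]
  have hb1 : i * ncont k 2 s - a' 1 ≤ (ncont k 1 s + ncont k 2 s * m) * u 1 := by
    rw [hu1]; exact (ceil_div_bounds _ _ hDpos).1
  have hbj : ∀ j, 2 ≤ j → j ≤ s →
      u (j - 1) * ncont k (j + 1) s - a' j ≤ ncont k j s * u j ∧
      ncont k j s * (u j - 1) < u (j - 1) * ncont k (j + 1) s - a' j := by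
    intro j h1 h2
    rw [huj j h1 h2]
    exact ceil_div_bounds _ _ (by linarith [hnpos j (by omega) (by omega)])
  -- nonnegativity
  have hnonneg : ∀ j, 1 ≤ j → j ≤ s → 0 ≤ u j := by
    intro j
    induction j using Nat.strong_induction_on with
    | _ j ih =>
      intro h1 h2
      rcases eq_or_lt_of_le h1 with hj1 | hj1
      · -- j = 1
        have hj : j = 1 := hj1.symm
        subst hj
        by_contra hcon
        push_neg at hcon
        have hle : u 1 ≤ -1 := by omega
        have hmul : (ncont k 1 s + ncont k 2 s * m) * u 1 ≤
            (ncont k 1 s + ncont k 2 s * m) * (-1) :=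
          mul_le_mul_of_nonneg_left hle (le_of_lt hDpos)
        have hiq : 0 ≤ i * ncont k 2 s := mul_nonneg hi hq0
        have ha1 : a' 1 < ncont k 1 s := hSI' 1 le_rfl hs
        linarith
      · -- j ≥ 2
        have hj2 : 2 ≤ j := hj1
        obtain ⟨hA, _⟩ := hbj j hj2 h2
        have hu_prev : 0 ≤ u (j - 1) := ih (j - 1) (by omega) (by omega) (by omega)
        have hn1 : 0 ≤ ncont k (j + 1) s := (hpair j hj2 (by omega)).1
        have hnum : 0 ≤ u (j - 1) * ncont k (j + 1) s := mul_nonneg hu_prev hn1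
        have haj : a' j < ncont k j s := hSI' j (by omega) h2
        by_contra hcon
        push_neg at hcon
        have hle : u j ≤ -1 := by omega
        have hnjpos : (0:ℤ) < ncont k j s := by linarith [hnpos j hj2 (by omega)]
        have hmul : ncont k j s * u j ≤ ncont k j s * (-1) :=
          mul_le_mul_of_nonneg_left hle (le_of_lt hnjpos)
        linarith
  refine ⟨hnonneg, ?_⟩
  intro j h1 h2
  rcases eq_or_lt_of_le h1 with hj1 | hj1
  · -- j = 1
    have hj : j = 1 := hj1.symm
    subst hj
    simp only [show (1:ℕ) - 1 = 0 from rfl, hu0, hc1]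
    rcases eq_or_lt_of_le hs with hs1 | hs2
    · -- s = 1
      have hseq : s = 1 := hs1.symm
      subst hseq
      have e2 : ncont k 2 1 = 1 := by rw [ncont]; norm_num
      have e3 : ncont k 3 1 = 0 := by rw [ncont]; norm_num
      have e1 := ncont_rec k 1 1 le_rfl
      have h3 : ncont k (1 + 1) 1 = ncont k 2 1 := rfl
      have h4 : ncont k (1 + 2) 1 = ncont k 3 1 := rfl
      rw [h3, h4, e2, e3] at e1
      have ea := hsplit 1 le_rfl le_rfl
      have h5 : ncont k (1 + 1) 1 = ncont k 2 1 := rfl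
      rw [h5, e2] at ea
      have ea2 : a' 2 = 0 := ha'top
      rw [e2, e1] at hb1
      have hu2 : u 2 = 0 := hus
      rw [hu2]
      have e1u : (k 1 * 1 - 0 + 1 * m) * u 1 = (k 1 + m) * u 1 := by ring
      rw [e1u] at hb1
      linarith
    · -- s ≥ 2
      obtain ⟨_, hB2⟩ := hbj 2 le_rfl hs2
      have h21 : (2:ℕ) - 1 = 1 := rfl
      rw [h21] at hB2
      have e1 := ncont_rec k s 1 hs
      have hsp := hsplit 1 le_rfl hs
      have h3 : ncont k (1 + 1) s = ncont k 2 s := rfl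
      have h4 : ncont k (1 + 2) s = ncont k 3 s := rfl
      have h5 : ncont k (2 + 1) s = ncont k 3 s := rfl
      rw [h3, h4] at e1
      rw [h3] at hsp
      rw [h5] at hB2
      -- key: q * X < q  where X = i - (k1+m) u1 + u2 - a1
      have e1u : ncont k 1 s * u 1 = (k 1 * ncont k 2 s - ncont k 3 s) * u 1 := by
        rw [← e1]
      have key : ncont k 2 s * (i - (k 1 + m) * u 1 + u 2 - a 1) < ncont k 2 s := by
        linarith [hb1, hB2, e1u, hsp]
      by_contra hcon
      push_neg at hcon
      have hXpos : 0 < i - (k 1 + m) * u 1 + u 2 - a 1 := by linarith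
      have hX1 : 1 ≤ i - (k 1 + m) * u 1 + u 2 - a 1 := hXpos
      have hmul : ncont k 2 s * 1 ≤ ncont k 2 s * (i - (k 1 + m) * u 1 + u 2 - a 1) :=
        mul_le_mul_of_nonneg_left hX1 hq0
      linarith
  · -- j ≥ 2
    have hj2 : 2 ≤ j := hj1
    rw [hcj j hj2]
    obtain ⟨hA, _⟩ := hbj j hj2 h2
    rcases eq_or_lt_of_le h2 with hjs | hjs
    · -- j = s
      subst hjs
      rw [ncont_top] at hA
      have es := ncont_rec k j j le_rfl
      rw [show j + 2 = j + 2 from rfl, ncont_top, ncont_top2] at es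
      have hsp := hsplit j (by omega) le_rfl
      rw [ncont_top] at hsp
      have ea2 : a' (j + 1) = 0 := ha'top
      rw [hus]
      have : ncont k j j * u j = (k j * 1 - 0) * u j := by rw [← es]
      linarith [this, hA, hsp, ea2]
    · -- 2 ≤ j < s
      obtain ⟨_, hB⟩ := hbj (j + 1) (by omega) hjs
      rw [Nat.add_sub_cancel] at hB
      have erec := ncont_rec k s j (by omega)
      have hsp := hsplit j (by omega) (by omega)
      have hn1 : 1 ≤ ncont k (j + 1) s := hnpos (j + 1) (by omega) (by omega)
      have erecu : ncont k j s * u j =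
          (k j * ncont k (j + 1) s - ncont k (j + 2) s) * u j := by rw [← erec]
      have hidx : ncont k (j + 1 + 1) s = ncont k (j + 2) s := rfl
      rw [hidx] at hB
      have key : ncont k (j + 1) s * (u (j - 1) - k j * u j + u (j + 1) - a j) <
          ncont k (j + 1) s := by
        linarith [hA, hB, erecu, hsp]
      by_contra hcon
      push_neg at hcon
      have hXpos : 0 < u (j - 1) - k j * u j + u (j + 1) - a j := by linarith
      have hX1 : 1 ≤ u (j - 1) - k j * u j + u (j + 1) - a j := hXpos
      have hmul : ncont k (j + 1) s * 1 ≤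
          ncont k (j + 1) s * (u (j - 1) - k j * u j + u (j + 1) - a j) :=
        mul_le_mul_of_nonneg_left hX1 (by linarith)
      linarith
end

section
/- Let s ≥ 1 and integers k_1 ≥ 1, k_j ≥ 2 for 2 ≤ j ≤ s, with continuants n_{ij} and p := n_{1s}. Then the map (a_1,…,a_s) ↦ a := Σ_{t=1}^{s} n_{t+1,s}·a_t is a bijection from the set of integer tuples satisfying (SI) — namely a_j ≥ 0 for all j, and n_{i+1,s}·a_i + n_{i+2,s}·a_{i+1} + ⋯ + n_{ss}·a_{s−1} + a_s < n_{is} for every 1 ≤ i ≤ s — onto {0,1,…,p−1}; its inverse is given inductively by a_i = ⌊(a − Σ_{t=1}^{i−1} n_{t+1,s}·a_t)/n_{i+1,s}⌋ for 1 ≤ i ≤ s. -/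
namespace SpincAux

open Finset

lemma ncont_of_lt (k : ℕ → ℤ) {i j : ℕ} (h : j + 1 < i) : ncont k i j = 0 := by
  rw [ncont, if_pos h]

lemma ncont_succ (k : ℕ → ℤ) (j : ℕ) : ncont k (j + 1) j = 1 := by
  rw [ncont, if_neg (by omega), if_pos rfl]

lemma ncont_step (k : ℕ → ℤ) {i j : ℕ} (h : i ≤ j) :
    ncont k i j = k i * ncont k (i + 1) j - ncont k (i + 2) j := by
  rw [ncont, if_neg (by omega), if_neg (by omega)]

/-- Positivity/monotonicity chain for the continuants, by downward induction. -/
lemma ncont_chain (s : ℕ) (k : ℕ → ℤ) (hk : ∀ j, 2 ≤ j → j ≤ s → 2 ≤ k j) :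
    ∀ d j, s + 1 = j + d → 2 ≤ j →
      ncont k (j + 1) s < ncont k j s ∧ 0 ≤ ncont k (j + 1) s := by
  intro d
  induction d with
  | zero =>
    intro j hj _
    obtain rfl : j = s + 1 := by omega
    have h1 : ncont k (s + 1 + 1) s = 0 := ncont_of_lt k (by omega)
    have h2 : ncont k (s + 1) s = 1 := ncont_succ k s
    rw [h1, h2]
    omega
  | succ d ih =>
    intro j hj h2j
    have hjs : j ≤ s := by omega
    obtain ⟨ih1, ih2⟩ := ih (j + 1) (by omega) (by omega)
    have hkj := hk j h2j hjs
    have hstep := ncont_step k (i := j) (j := s) hjs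
    have h1 : (1 : ℤ) ≤ ncont k (j + 1) s := by omega
    have ih1' : ncont k (j + 2) s < ncont k (j + 1) s := ih1
    constructor
    · have hmul : 2 * ncont k (j + 1) s ≤ k j * ncont k (j + 1) s :=
        mul_le_mul_of_nonneg_right hkj (by omega)
      omega
    · omega

lemma ncont_pos (s : ℕ) (k : ℕ → ℤ) (hk : ∀ j, 2 ≤ j → j ≤ s → 2 ≤ k j)
    {j : ℕ} (h2 : 2 ≤ j) (hj : j ≤ s + 1) : 1 ≤ ncont k j s := by
  obtain ⟨h1, h0⟩ := ncont_chain s k hk (s + 1 - j) j (by omega) h2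
  omega

/-- Tail sum from position `i` (ℕ-indexed). -/
def tS (s : ℕ) (k : ℕ → ℤ) (v : Fin s → ℤ) (i : ℕ) : ℤ :=
  ∑ t ∈ Finset.univ.filter (fun t : Fin s => i ≤ t.val), ncont k (t.val + 2) s * v t

lemma tS_stop (s : ℕ) (k : ℕ → ℤ) (v : Fin s → ℤ) {i : ℕ} (h : s ≤ i) :
    tS s k v i = 0 := by
  unfold tS
  rw [Finset.filter_false_of_mem, Finset.sum_empty]
  intro x _
  have := x.isLt
  omega

lemma tS_split (s : ℕ) (k : ℕ → ℤ) (v : Fin s → ℤ) {i : ℕ} (hi : i < s) :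
    tS s k v i = ncont k (i + 2) s * v ⟨i, hi⟩ + tS s k v (i + 1) := by
  unfold tS
  rw [Finset.sum_filter, Finset.sum_filter]
  have key : ∀ t : Fin s,
      (if i ≤ t.val then ncont k (t.val + 2) s * v t else 0)
        = (if t = ⟨i, hi⟩ then ncont k (t.val + 2) s * v t else 0)
          + (if i + 1 ≤ t.val then ncont k (t.val + 2) s * v t else 0) := by
    intro t
    by_cases h : t = ⟨i, hi⟩
    · subst h
      simp
    · have hv : t.val ≠ i := fun hv => h (Fin.ext hv)
      rw [if_neg h]
      by_cases h2 : i ≤ t.val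
      · rw [if_pos h2, if_pos (by omega), zero_add]
      · rw [if_neg h2, if_neg (by omega), zero_add]
  rw [Finset.sum_congr rfl (fun t _ => key t), Finset.sum_add_distrib,
    Finset.sum_ite_eq' Finset.univ (⟨i, hi⟩ : Fin s)
      (fun t => ncont k (t.val + 2) s * v t), if_pos (Finset.mem_univ _)]

lemma tS_zero (s : ℕ) (k : ℕ → ℤ) (v : Fin s → ℤ) :
    tS s k v 0 = ∑ t : Fin s, ncont k (t.val + 2) s * v t := by
  unfold tS
  rw [Finset.filter_true_of_mem (fun t _ => Nat.zero_le _)]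

lemma tS_congr (s : ℕ) (k : ℕ → ℤ) (v w : Fin s → ℤ) {i : ℕ}
    (h : ∀ t : Fin s, i ≤ t.val → v t = w t) : tS s k v i = tS s k w i := by
  unfold tS
  refine Finset.sum_congr rfl fun t ht => ?_
  rw [Finset.mem_filter] at ht
  rw [h t ht.2]

lemma tS_nonneg (s : ℕ) (k : ℕ → ℤ) (hk : ∀ j, 2 ≤ j → j ≤ s → 2 ≤ k j)
    (v : Fin s → ℤ) (hv : ∀ t, 0 ≤ v t) (i : ℕ) : 0 ≤ tS s k v i := by
  refine Finset.sum_nonneg fun t _ => mul_nonneg ?_ (hv t)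
  have := t.isLt
  have := ncont_pos s k hk (j := t.val + 2) (by omega) (by omega)
  omega

lemma div_helper (b q r : ℤ) (h0 : 0 ≤ r) (h1 : r < b) : (b * q + r) / b = q := by
  have hb : 0 < b := lt_of_le_of_lt h0 h1
  rw [add_comm, Int.add_mul_ediv_left r q (ne_of_gt hb),
    Int.ediv_eq_zero_of_lt h0 h1, zero_add]

/-- Uniform bound: the tail sum from any position `i ≤ s` is `< n_{i+1,s}`. -/
lemma tS_lt (s : ℕ) (k : ℕ → ℤ) (v : Fin s → ℤ)
    (C : ∀ j : Fin s, tS s k v j.val < ncont k (j.val + 1) s)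
    {i : ℕ} (hi : i ≤ s) : tS s k v i < ncont k (i + 1) s := by
  rcases lt_or_eq_of_le hi with h | h
  · exact C ⟨i, h⟩
  · rw [h, tS_stop s k v le_rfl, ncont_succ]
    omega

/-- Uniqueness of digits, by downward induction. -/
lemma uniq (s : ℕ) (k : ℕ → ℤ) (hk : ∀ j, 2 ≤ j → j ≤ s → 2 ≤ k j) :
    ∀ d i, i + d = s → ∀ v w : Fin s → ℤ,
      (∀ t, 0 ≤ v t) → (∀ t, 0 ≤ w t) →
      (∀ j : Fin s, tS s k v j.val < ncont k (j.val + 1) s) →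
      (∀ j : Fin s, tS s k w j.val < ncont k (j.val + 1) s) →
      tS s k v i = tS s k w i → ∀ t : Fin s, i ≤ t.val → v t = w t := by
  intro d
  induction d with
  | zero =>
    intro i hi v w _ _ _ _ _ t ht
    have := t.isLt
    omega
  | succ d ih =>
    intro i hi v w hv hw Cv Cw heq t ht
    have his : i < s := by omega
    have hb : 1 ≤ ncont k (i + 2) s := ncont_pos s k hk (by omega) (by omega)
    have hsv := tS_split s k v his
    have hsw := tS_split s k w his
    have h0v : 0 ≤ tS s k v (i + 1) := tS_nonneg s k hk v hv (i + 1)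
    have h0w : 0 ≤ tS s k w (i + 1) := tS_nonneg s k hk w hw (i + 1)
    have h1v : tS s k v (i + 1) < ncont k (i + 2) s := tS_lt s k v Cv (by omega)
    have h1w : tS s k w (i + 1) < ncont k (i + 2) s := tS_lt s k w Cw (by omega)
    have hdig : v ⟨i, his⟩ = w ⟨i, his⟩ := by
      have e1 : tS s k v i / ncont k (i + 2) s = v ⟨i, his⟩ := by
        rw [hsv]; exact div_helper _ _ _ h0v h1v
      have e2 : tS s k w i / ncont k (i + 2) s = w ⟨i, his⟩ := by
        rw [hsw]; exact div_helper _ _ _ h0w h1w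
      rw [← e1, ← e2, heq]
    have htail : tS s k v (i + 1) = tS s k w (i + 1) := by
      rw [hsv, hsw, hdig] at heq
      exact by linarith
    rcases Nat.lt_or_ge i t.val with h | h
    · exact ih (i + 1) (by omega) v w hv hw Cv Cw htail t (by omega)
    · have : t = ⟨i, his⟩ := Fin.ext (show t.val = i by omega)
      rw [this]; exact hdig

/-- Existence of digit expansions, by downward induction. -/
lemma exists_tail (s : ℕ) (k : ℕ → ℤ) (hk : ∀ j, 2 ≤ j → j ≤ s → 2 ≤ k j) :
    ∀ d i, i + d = s → ∀ a : ℤ, 0 ≤ a → a < ncont k (i + 1) s →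
      ∃ v : Fin s → ℤ, (∀ t, 0 ≤ v t) ∧
        (∀ j : Fin s, i ≤ j.val → tS s k v j.val < ncont k (j.val + 1) s) ∧
        tS s k v i = a := by
  intro d
  induction d with
  | zero =>
    intro i hi a ha0 ha1
    have hse : i = s := by omega
    refine ⟨fun _ => 0, fun j => le_rfl, fun j hj => ?_, ?_⟩
    · exact absurd j.isLt (by omega)
    · rw [tS_stop s k _ (by omega)]
      rw [hse, ncont_succ] at ha1
      omega
  | succ d ih =>
    intro i hi a ha0 ha1
    have his : i < s := by omega
    set b := ncont k (i + 2) s with hbdef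
    have hb : 1 ≤ b := ncont_pos s k hk (by omega) (by omega)
    have hbne : b ≠ 0 := by omega
    have hr0 : 0 ≤ a % b := Int.emod_nonneg a hbne
    have hr1 : a % b < b := Int.emod_lt_of_pos a (by omega)
    obtain ⟨v', hv'0, hv'C, hv'S⟩ := ih (i + 1) (by omega) (a % b) hr0 hr1
    set v := Function.update v' (⟨i, his⟩ : Fin s) (a / b) with hvdef
    have hvi : v ⟨i, his⟩ = a / b := Function.update_self _ _ _
    have hvt : ∀ t : Fin s, i + 1 ≤ t.val → v t = v' t := by
      intro t ht
      refine Function.update_of_ne ?_ _ _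
      intro h
      have hti : t.val = i := by rw [h]
      omega
    have htail : tS s k v (i + 1) = tS s k v' (i + 1) := tS_congr s k v v' hvt
    have hSplit : tS s k v i = b * (a / b) + a % b := by
      rw [tS_split s k v his, hvi, htail, hv'S]
    have hSv : tS s k v i = a := by
      rw [hSplit, Int.mul_ediv_add_emod a b]
    refine ⟨v, ?_, ?_, hSv⟩
    · intro t
      by_cases h : t = ⟨i, his⟩
      · rw [h, hvi]
        exact Int.ediv_nonneg ha0 (by omega)
      · rw [hvdef, Function.update_of_ne h]
        exact hv'0 t
    · intro j hj
      rcases Nat.lt_or_ge i j.val with h | h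
      · rw [tS_congr s k v v' (fun t ht => hvt t (by omega))]
        exact hv'C j h
      · have : j.val = i := by omega
        rw [this, hSv]
        exact ha1

end SpincAux

open Finset in
/-- The map `(a_1,…,a_s) ↦ a = Σ_{t=1}^s n_{t+1,s}·a_t` is a
bijection from the set of integer tuples satisfying `(SI)` onto
`{0,1,…,p−1}`, `p = n_{1s}`; the inverse is given inductively by
`a_i = ⌊(a − Σ_{t<i} n_{t+1,s}·a_t)/n_{i+1,s}⌋`.
(Here the tuple `(a_1,…,a_s)` is modeled as `v : Fin s → ℤ`, `v t = a_{t+1}`.) -/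
theorem spinc_parametrization_bijective
    (s : ℕ) (hs : 1 ≤ s) (k : ℕ → ℤ)
    (hk1 : 1 ≤ k 1) (hk : ∀ j, 2 ≤ j → j ≤ s → 2 ≤ k j) :
    Set.BijOn (fun v : Fin s → ℤ => ∑ t : Fin s, ncont k (t.val + 2) s * v t)
      {v : Fin s → ℤ | (∀ t, 0 ≤ v t) ∧
        ∀ i : Fin s,
          (∑ t ∈ univ.filter (fun t : Fin s => i ≤ t), ncont k (t.val + 2) s * v t)
            < ncont k (i.val + 1) s}
      (Set.Ico 0 (ncont k 1 s))
      ∧ ∀ v : Fin s → ℤ,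
          ((∀ t, 0 ≤ v t) ∧
            ∀ i : Fin s,
              (∑ t ∈ univ.filter (fun t : Fin s => i ≤ t), ncont k (t.val + 2) s * v t)
                < ncont k (i.val + 1) s) →
          ∀ i : Fin s,
            v i = ((∑ t : Fin s, ncont k (t.val + 2) s * v t)
                - ∑ t ∈ univ.filter (fun t : Fin s => t < i), ncont k (t.val + 2) s * v t)
              / ncont k (i.val + 2) s := by
  classical
  open SpincAux in
  -- translate the constraint in the statement into the `tS` form
  have hfilter : ∀ (v : Fin s → ℤ) (i : Fin s),
      (∑ t ∈ univ.filter (fun t : Fin s => i ≤ t), ncont k (t.val + 2) s * v t)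
        = tS s k v i.val := by
    intro v i
    unfold SpincAux.tS
    congr 1
  have hCiff : ∀ v : Fin s → ℤ,
      (∀ i : Fin s,
        (∑ t ∈ univ.filter (fun t : Fin s => i ≤ t), ncont k (t.val + 2) s * v t)
          < ncont k (i.val + 1) s)
      ↔ (∀ j : Fin s, tS s k v j.val < ncont k (j.val + 1) s) := by
    intro v
    constructor
    · intro h j; rw [← hfilter v j]; exact h j
    · intro h j; rw [hfilter v j]; exact h j
  -- the key formula lemma
  have hformula : ∀ v : Fin s → ℤ,
      ((∀ t, 0 ≤ v t) ∧
        ∀ i : Fin s,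
          (∑ t ∈ univ.filter (fun t : Fin s => i ≤ t), ncont k (t.val + 2) s * v t)
            < ncont k (i.val + 1) s) →
      ∀ i : Fin s,
        v i = ((∑ t : Fin s, ncont k (t.val + 2) s * v t)
            - ∑ t ∈ univ.filter (fun t : Fin s => t < i), ncont k (t.val + 2) s * v t)
          / ncont k (i.val + 2) s := by
    intro v ⟨hv0, hvC⟩ i
    have hC := (hCiff v).mp hvC
    have hdiff : (∑ t : Fin s, ncont k (t.val + 2) s * v t)
        - (∑ t ∈ univ.filter (fun t : Fin s => t < i), ncont k (t.val + 2) s * v t)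
        = tS s k v i.val := by
      rw [← Finset.sum_filter_add_sum_filter_not univ (fun t : Fin s => t < i)
        (fun t => ncont k (t.val + 2) s * v t)]
      have : (univ.filter (fun t : Fin s => ¬ t < i))
          = univ.filter (fun t : Fin s => (i.val ≤ t.val)) :=
        Finset.filter_congr (fun t _ => by rw [not_lt, Fin.le_def])
      rw [this]
      unfold SpincAux.tS
      ring
    rw [hdiff]
    have hsplit := tS_split s k v i.isLt
    have h0 : 0 ≤ tS s k v (i.val + 1) := tS_nonneg s k hk v hv0 _
    have h1 : tS s k v (i.val + 1) < ncont k (i.val + 2) s :=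
      tS_lt s k v hC (by omega)
    have : (⟨i.val, i.isLt⟩ : Fin s) = i := Fin.eta i i.isLt
    rw [this] at hsplit
    rw [hsplit, div_helper _ _ _ h0 h1]
  refine ⟨⟨?_, ?_, ?_⟩, hformula⟩
  · -- MapsTo
    intro v hv
    obtain ⟨hv0, hvC⟩ := hv
    have hC := (hCiff v).mp hvC
    constructor
    · have h0 := tS_nonneg s k hk v hv0 0
      rw [tS_zero] at h0
      exact h0
    · have h1 := tS_lt s k v hC (i := 0) (by omega)
      rw [tS_zero] at h1
      exact h1
  · -- InjOn
    intro v hv w hw heq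
    obtain ⟨hv0, hvC⟩ := hv
    obtain ⟨hw0, hwC⟩ := hw
    have heq' : tS s k v 0 = tS s k w 0 := by
      rw [tS_zero, tS_zero]
      exact heq
    have hu := uniq s k hk s 0 (Nat.zero_add s) v w hv0 hw0 ((hCiff v).mp hvC)
      ((hCiff w).mp hwC) heq'
    funext t
    exact hu t (Nat.zero_le _)
  · -- SurjOn
    intro a ha
    obtain ⟨ha0, ha1⟩ := ha
    obtain ⟨v, hv0, hvC, hvS⟩ := exists_tail s k hk s 0 (Nat.zero_add s) a ha0
      ha1
    refine ⟨v, ⟨hv0, ?_⟩, ?_⟩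
    · exact (hCiff v).mpr (fun j => hvC j (Nat.zero_le _))
    · show (∑ t : Fin s, ncont k (t.val + 2) s * v t) = a
      rw [← tS_zero s k v]
      exact hvS
end

section
/- Let Γ be a numerical semigroup with δ := #(ℕ∖Γ) ≥ 1, let p,q ≥ 1 be integers, 0 ≤ a < p, and let t_a and τ_a be as defined. Then for every 0 ≤ t ≤ t_a: (i) τ_a(2t+1) = τ_a(2t) + #{γ ∈ Γ : γ ≤ (tp+a)/q}; (ii) τ_a(2t+1) > τ_a(2t); and (iii) if moreover Γ is symmetric, then τ_a(2t+1) > τ_a(2t+2). Consequently, when Γ is symmetric, the graded root (R_{τ_a},χ_{τ_a}) has exactly t_a + 2 local minimum points, corresponding to the values τ_a(2t), t = 0,1,…,t_a+1. -/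
noncomputable section

/-- The delta-invariant `δ = #(ℕ∖Γ)` of a numerical semigroup `Γ`. -/
def sdelta (Γ : Set ℕ) : ℕ := Γᶜ.ncard

/-- `α_i = #{k ∈ ℕ∖Γ : k > i}`. -/
def salpha (Γ : Set ℕ) (i : ℕ) : ℕ := {k : ℕ | k ∉ Γ ∧ i < k}.ncard

/-- `τ_a(2t) = t(1−δ) + Σ_{j=0}^{t−1} ⌊(jp+a)/q⌋`. -/
def tauEven (Γ : Set ℕ) (p q a : ℕ) (t : ℕ) : ℤ :=
  (t : ℤ) * (1 - (sdelta Γ : ℤ)) + ∑ j ∈ Finset.range t, (((j * p + a) / q : ℕ) : ℤ)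

/-- The function `τ_a : {0,1,…,2t_a+2} → ℤ`:
`τ_a(2t)` as above and `τ_a(2t+1) = τ_a(2t+2) + α_{⌊(tp+a)/q⌋}`. -/
def tauFun (Γ : Set ℕ) (p q a : ℕ) (n : ℕ) : ℤ :=
  if n % 2 = 0 then tauEven Γ p q a (n / 2)
  else tauEven Γ p q a (n / 2 + 1) + (salpha Γ ((n / 2 * p + a) / q) : ℤ)

/-- `t_a = ⌊((2δ−1)q − a − 1)/p⌋`. -/
def tA (Γ : Set ℕ) (p q a : ℕ) : ℤ :=
  ((2 * (sdelta Γ : ℤ) - 1) * (q : ℤ) - (a : ℤ) - 1) / (p : ℤ)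

/-- The length `T₀ = 2t_a + 2` of the domain of `τ_a`. -/
def rootT0 (Γ : Set ℕ) (p q a : ℕ) : ℕ := (2 * tA Γ p q a + 2).toNat

end

/-! Splitting `{0,…,m}` and `ℕ∖Γ` at `m` gives `#{γ ∈ Γ : γ ≤ m} = m + 1 − δ + α_m`, which
turns the recursion defining `τ_a` into (i); this count is positive because `0 ∈ Γ`. For
symmetric `Γ` the Frobenius number `2δ−1` is a gap, and `t ≤ t_a` forces `⌊(tp+a)/q⌋ < 2δ−1`,
so `α_{⌊(tp+a)/q⌋} > 0`, which is (iii). Hence `τ_a` zigzags: every even index is strictly below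
its neighbours. In the graded root of such a `τ` the local minima are exactly the bottom
vertices `v_i^{τ(i)}` with `i` even: any other vertex lies directly above a vertex of its own
path or, for odd `i`, of the path `i − 1`, while two even bottoms are kept apart by the odd
peak between them. -/

namespace NumericalSemigroup

def IsSymmetric (Γ : Set ℕ) : Prop :=
  ∀ k : ℕ, k ≤ 2 * sdelta Γ - 1 → (k ∈ Γ ↔ (2 * sdelta Γ - 1 - k) ∉ Γ)

variable {Γ : Set ℕ}

lemma ncard_mem_le_add_sdelta (hfin : Γᶜ.Finite) (m : ℕ) :
    {γ : ℕ | γ ∈ Γ ∧ γ ≤ m}.ncard + sdelta Γ = m + 1 + salpha Γ m := by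
  have hIic : (Set.Iic m ∩ Γ).ncard + (Set.Iic m \ Γ).ncard = m + 1 := by
    rw [Set.ncard_inter_add_ncard_sdiff_eq_ncard _ _ (Set.finite_Iic m), ← Finset.coe_Iic,
      Set.ncard_coe_finset, Nat.card_Iic]
  have hgaps : (Γᶜ ∩ Set.Ioi m).ncard + (Γᶜ \ Set.Ioi m).ncard = sdelta Γ :=
    Set.ncard_inter_add_ncard_sdiff_eq_ncard _ _ hfin
  have hΓ : {γ : ℕ | γ ∈ Γ ∧ γ ≤ m} = Set.Iic m ∩ Γ := Set.inter_comm _ _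
  have hlow : Γᶜ \ Set.Ioi m = Set.Iic m \ Γ := by
    ext k
    simp only [Set.mem_sdiff, Set.mem_compl_iff, Set.mem_Ioi, Set.mem_Iic, not_lt]
    tauto
  rw [hlow] at hgaps
  rw [salpha, hΓ]
  change _ = m + 1 + (Γᶜ ∩ Set.Ioi m).ncard
  omega

lemma salpha_pos (hfin : Γᶜ.Finite) {m k : ℕ} (hk : k ∉ Γ) (hmk : m < k) : 0 < salpha Γ m :=
  (Set.ncard_pos (hfin.subset fun _ hx => hx.1)).mpr ⟨k, hk, hmk⟩

lemma IsSymmetric.frobenius_not_mem (hsym : IsSymmetric Γ) (h0 : 0 ∈ Γ) :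
    2 * sdelta Γ - 1 ∉ Γ := by
  simpa using (hsym 0 (Nat.zero_le _)).mp h0

lemma IsSymmetric.one_le_sdelta (hsym : IsSymmetric Γ) (h0 : 0 ∈ Γ) : 1 ≤ sdelta Γ := by
  by_contra! hδ
  exact hsym.frobenius_not_mem h0 (by simpa [Nat.lt_one_iff.mp hδ] using h0)

end NumericalSemigroup

open NumericalSemigroup

section Tau

variable {Γ : Set ℕ} {p q a : ℕ}

lemma tauFun_two_mul (t : ℕ) : tauFun Γ p q a (2 * t) = tauEven Γ p q a t := by
  simp [tauFun]

lemma tauFun_two_mul_add_one (t : ℕ) :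
    tauFun Γ p q a (2 * t + 1) = tauEven Γ p q a (t + 1) + salpha Γ ((t * p + a) / q) := by
  have hhalf : (2 * t + 1) / 2 = t := by omega
  simp [tauFun, hhalf]

lemma tauEven_succ (t : ℕ) :
    tauEven Γ p q a (t + 1) = tauEven Γ p q a t + 1 - sdelta Γ + ((t * p + a) / q : ℕ) := by
  simp only [tauEven, Finset.sum_range_succ]
  push_cast
  ring

lemma tauFun_two_mul_add_one_eq (hfin : Γᶜ.Finite) (t : ℕ) :
    tauFun Γ p q a (2 * t + 1)
      = tauFun Γ p q a (2 * t) + ({γ : ℕ | γ ∈ Γ ∧ γ ≤ (t * p + a) / q}.ncard : ℤ) := by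
  have hcount := ncard_mem_le_add_sdelta hfin ((t * p + a) / q)
  rw [tauFun_two_mul_add_one, tauFun_two_mul, tauEven_succ]
  omega

lemma tauFun_two_mul_lt (h0 : 0 ∈ Γ) (hfin : Γᶜ.Finite) (t : ℕ) :
    tauFun Γ p q a (2 * t) < tauFun Γ p q a (2 * t + 1) := by
  have hpos : 0 < {γ : ℕ | γ ∈ Γ ∧ γ ≤ (t * p + a) / q}.ncard :=
    (Set.ncard_pos ((Set.finite_Iic _).subset fun _ hx => hx.2)).mpr ⟨0, h0, Nat.zero_le _⟩
  rw [tauFun_two_mul_add_one_eq hfin]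
  omega

lemma div_lt_of_le_tA (hp : 1 ≤ p) (hq : 1 ≤ q) (hδ : 1 ≤ sdelta Γ) {t : ℕ}
    (ht : (t : ℤ) ≤ tA Γ p q a) : (t * p + a) / q < 2 * sdelta Γ - 1 := by
  have htp : (t : ℤ) * p ≤ (2 * (sdelta Γ : ℤ) - 1) * q - a - 1 :=
    (Int.le_ediv_iff_mul_le (by exact_mod_cast hp)).mp ht
  rw [Nat.div_lt_iff_lt_mul hq]
  zify [show 1 ≤ 2 * sdelta Γ by omega]
  linarith

lemma tauFun_two_mul_add_two_lt (h0 : 0 ∈ Γ) (hfin : Γᶜ.Finite) (hsym : IsSymmetric Γ)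
    (hp : 1 ≤ p) (hq : 1 ≤ q) {t : ℕ} (ht : (t : ℤ) ≤ tA Γ p q a) :
    tauFun Γ p q a (2 * t + 2) < tauFun Γ p q a (2 * t + 1) := by
  have hα : 0 < salpha Γ ((t * p + a) / q) :=
    salpha_pos hfin (hsym.frobenius_not_mem h0)
      (div_lt_of_le_tA hp hq (hsym.one_le_sdelta h0) ht)
  rw [show 2 * t + 2 = 2 * (t + 1) by ring, tauFun_two_mul, tauFun_two_mul_add_one]
  omega

end Tau

section GradedRoot

def IsZigzag (T0 : ℕ) (τ : ℕ → ℤ) : Prop :=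
  ∀ i j, j ≤ T0 → (j = i + 1 ∨ i = j + 1) → i % 2 = 0 → τ i < τ j

variable {T0 : ℕ} {τ : ℕ → ℤ}

lemma rootMk_ne_rootMk {i j l : ℕ} {k k' : ℤ} (hi : i ≤ T0) (hk : τ i ≤ k) (hj : j ≤ T0)
    (hk' : τ j ≤ k') (hl : (i ≤ l ∧ l ≤ j) ∨ (j ≤ l ∧ l ≤ i)) (hτ : k < τ l) :
    rootMk T0 τ i k hi hk ≠ rootMk T0 τ j k' hj hk' :=
  fun h => (Quotient.exact h).2 l hl |>.not_gt hτ

lemma not_isLocMin_mk_rootStep (x : RootVpre T0 τ) :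
    ¬ IsLocMin (rootAdj T0 τ) (rootχ T0 τ) (Quotient.mk _ (rootStep T0 τ x)) :=
  fun h => (lt_add_one x.1.2).not_gt (h _ (Or.inr ⟨x, rfl, rfl⟩))

lemma IsZigzag.isLocMin_rootMk (hz : IsZigzag T0 τ) {i : ℕ} (hi : i % 2 = 0) (hiT : i ≤ T0) :
    IsLocMin (rootAdj T0 τ) (rootχ T0 τ) (rootMk T0 τ i (τ i) hiT le_rfl) := by
  rintro w (⟨x, hv, rfl⟩ | ⟨x, rfl, hv⟩)
  · rw [hv]
    exact lt_add_one x.1.2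
  · obtain ⟨⟨j, k⟩, hj, hk⟩ := x
    dsimp only at hj hk
    change rootMk T0 τ i (τ i) hiT le_rfl = rootMk T0 τ j (k + 1) hj (by omega) at hv
    have hlevel : τ i = k + 1 := (Quotient.exact hv).1
    rcases lt_trichotomy j i with hlt | rfl | hgt
    · exact absurd hv (rootMk_ne_rootMk _ _ _ _ (l := i - 1) (Or.inr ⟨by omega, by omega⟩)
        (hz i (i - 1) (by omega) (Or.inr (by omega)) hi))
    · omega
    · exact absurd hv (rootMk_ne_rootMk _ _ _ _ (l := i + 1) (Or.inl ⟨by omega, hgt⟩)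
        (hz i (i + 1) (by omega) (Or.inl rfl) hi))

lemma IsZigzag.exists_eq_rootMk_of_isLocMin (hz : IsZigzag T0 τ) {v : RootV T0 τ}
    (hv : IsLocMin (rootAdj T0 τ) (rootχ T0 τ) v) :
    ∃ s, ∃ hs : 2 * s ≤ T0, v = rootMk T0 τ (2 * s) (τ (2 * s)) hs le_rfl := by
  obtain ⟨⟨⟨j, k⟩, hj, hk⟩, rfl⟩ := Quotient.exists_rep v
  dsimp only at hj hk
  obtain rfl : k = τ j := by
    by_contra hne
    exact not_isLocMin_mk_rootStep (⟨(j, k - 1), hj, by dsimp only; omega⟩ : RootVpre T0 τ)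
      (by simpa [rootStep] using hv)
  have hje : j % 2 = 0 := by
    by_contra hodd
    have hτ : τ (j - 1) < τ j := hz (j - 1) j hj (Or.inl (by omega)) (by omega)
    have hdown : τ (j - 1) ≤ τ j - 1 := by omega
    have hsame : Quotient.mk (RootSetoid T0 τ) ⟨(j, τ j), hj, le_rfl⟩
        = Quotient.mk _ (rootStep T0 τ ⟨(j - 1, τ j - 1), by dsimp only; omega, hdown⟩) :=
      Quotient.sound ⟨by simp [rootStep], fun l hl => by
        obtain rfl | rfl : l = j - 1 ∨ l = j := by simp only [rootStep] at hl; omega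
        exacts [hτ.le, le_rfl]⟩
    exact not_isLocMin_mk_rootStep _ (hsame ▸ hv)
  obtain ⟨s, rfl⟩ : ∃ s, j = 2 * s := ⟨j / 2, by omega⟩
  exact ⟨s, hj, rfl⟩

def rootValley (T0 : ℕ) (τ : ℕ → ℤ) (s : Fin (T0 / 2 + 1)) : RootV T0 τ :=
  rootMk T0 τ (2 * s) (τ (2 * s)) (by have := s.isLt; omega) le_rfl

lemma IsZigzag.rootValley_injective (hz : IsZigzag T0 τ) :
    Function.Injective (rootValley T0 τ) := by
  have hne : ∀ s s' : Fin (T0 / 2 + 1), s < s' → rootValley T0 τ s ≠ rootValley T0 τ s' := by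
    intro s s' hlt
    have hs' := s'.isLt
    have hlt' : (s : ℕ) < s' := hlt
    exact rootMk_ne_rootMk _ _ _ _ (l := 2 * s + 1) (Or.inl ⟨by omega, by omega⟩)
      (hz (2 * s) (2 * s + 1) (by omega) (Or.inl rfl) (by omega))
  intro s s' h
  by_contra hss
  rcases lt_or_gt_of_ne hss with hlt | hlt
  exacts [hne s s' hlt h, hne s' s hlt h.symm]

lemma IsZigzag.setOf_isLocMin_eq_range (hz : IsZigzag T0 τ) :
    {v | IsLocMin (rootAdj T0 τ) (rootχ T0 τ) v} = Set.range (rootValley T0 τ) := by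
  ext v
  constructor
  · intro hv
    obtain ⟨s, hs, rfl⟩ := hz.exists_eq_rootMk_of_isLocMin hv
    exact ⟨⟨s, by omega⟩, rfl⟩
  · rintro ⟨s, rfl⟩
    exact hz.isLocMin_rootMk (by omega) _

lemma IsZigzag.ncard_setOf_isLocMin (hz : IsZigzag T0 τ) :
    {v | IsLocMin (rootAdj T0 τ) (rootχ T0 τ) v}.ncard = T0 / 2 + 1 := by
  rw [hz.setOf_isLocMin_eq_range, Set.ncard_range_of_injective hz.rootValley_injective,
    Nat.card_eq_fintype_card, Fintype.card_fin]

end GradedRoot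

lemma isZigzag_tauFun {Γ : Set ℕ} {p q a : ℕ} (h0 : 0 ∈ Γ) (hfin : Γᶜ.Finite)
    (hsym : IsSymmetric Γ) (hp : 1 ≤ p) (hq : 1 ≤ q) :
    IsZigzag (rootT0 Γ p q a) (tauFun Γ p q a) := by
  intro i j hj hij hi
  obtain ⟨t, rfl⟩ : ∃ t, i = 2 * t := ⟨i / 2, by omega⟩
  rcases hij with rfl | hij
  · exact tauFun_two_mul_lt h0 hfin t
  · obtain ⟨s, rfl⟩ : ∃ s, j = 2 * s + 1 := ⟨j / 2, by omega⟩
    rw [show 2 * t = 2 * s + 2 by omega]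
    exact tauFun_two_mul_add_two_lt h0 hfin hsym hp hq (by unfold rootT0 at hj; omega)

open scoped Classical in
theorem tau_odd_values_and_local_minima_general
    (Γ : Set ℕ)
    (h0 : 0 ∈ Γ)
    (hfin : Γᶜ.Finite)
    (p q a : ℕ) (hp : 1 ≤ p) (hq : 1 ≤ q)
    (t : ℕ) (ht : (t : ℤ) ≤ tA Γ p q a) :
    tauFun Γ p q a (2 * t + 1)
        = tauFun Γ p q a (2 * t) + ({γ : ℕ | γ ∈ Γ ∧ γ ≤ (t * p + a) / q}.ncard : ℤ)
      ∧ tauFun Γ p q a (2 * t) < tauFun Γ p q a (2 * t + 1)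
      ∧ ((∀ k : ℕ, k ≤ 2 * sdelta Γ - 1 → (k ∈ Γ ↔ (2 * sdelta Γ - 1 - k) ∉ Γ)) →
          tauFun Γ p q a (2 * t + 2) < tauFun Γ p q a (2 * t + 1))
      ∧ ((∀ k : ℕ, k ≤ 2 * sdelta Γ - 1 → (k ∈ Γ ↔ (2 * sdelta Γ - 1 - k) ∉ Γ)) →
          {v : RootV (rootT0 Γ p q a) (tauFun Γ p q a) |
              IsLocMin (rootAdj (rootT0 Γ p q a) (tauFun Γ p q a))
                (rootχ (rootT0 Γ p q a) (tauFun Γ p q a)) v}.ncard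
            = (tA Γ p q a + 2).toNat
          ∧ ∀ (t' : ℕ) (h1 : 2 * t' ≤ rootT0 Γ p q a)
              (h2 : tauFun Γ p q a (2 * t') ≤ tauFun Γ p q a (2 * t')),
              (t' : ℤ) ≤ tA Γ p q a + 1 →
              IsLocMin (rootAdj (rootT0 Γ p q a) (tauFun Γ p q a))
                (rootχ (rootT0 Γ p q a) (tauFun Γ p q a))
                (rootMk (rootT0 Γ p q a) (tauFun Γ p q a) (2 * t')
                  (tauFun Γ p q a (2 * t')) h1 h2)) := by
  refine ⟨tauFun_two_mul_add_one_eq hfin t, tauFun_two_mul_lt h0 hfin t,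
    fun hsym => tauFun_two_mul_add_two_lt h0 hfin hsym hp hq ht, fun hsym => ?_⟩
  have hz := isZigzag_tauFun (a := a) h0 hfin hsym hp hq
  refine ⟨?_, fun t' h1 _ _ => hz.isLocMin_rootMk (by omega) h1⟩
  rw [hz.ncard_setOf_isLocMin]
  unfold rootT0
  omega

open scoped Classical in
/-- (Remark 4.5 of the paper.)  For `0 ≤ t ≤ t_a`:
(i) `τ_a(2t+1) = τ_a(2t) + #{γ ∈ Γ : γ ≤ (tp+a)/q}`; (ii) `τ_a(2t+1) > τ_a(2t)`;
(iii) if `Γ` is symmetric then `τ_a(2t+1) > τ_a(2t+2)`.  Consequently, when `Γ`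
is symmetric, the graded root `(R_{τ_a},χ_{τ_a})` has exactly `t_a + 2` local
minimum points, corresponding to the values `τ_a(2t)`, `t = 0,…,t_a+1`. -/
theorem tau_odd_values_and_local_minima
    (Γ : Set ℕ)
    (h0 : 0 ∈ Γ) (hadd : ∀ x ∈ Γ, ∀ y ∈ Γ, x + y ∈ Γ)
    (hfin : Γᶜ.Finite) (hδ1 : 1 ≤ sdelta Γ)
    (p q a : ℕ) (hp : 1 ≤ p) (hq : 1 ≤ q) (ha : a < p)
    (t : ℕ) (ht : (t : ℤ) ≤ tA Γ p q a) :
    tauFun Γ p q a (2 * t + 1)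
        = tauFun Γ p q a (2 * t) + ({γ : ℕ | γ ∈ Γ ∧ γ ≤ (t * p + a) / q}.ncard : ℤ)
      ∧ tauFun Γ p q a (2 * t) < tauFun Γ p q a (2 * t + 1)
      ∧ ((∀ k : ℕ, k ≤ 2 * sdelta Γ - 1 → (k ∈ Γ ↔ (2 * sdelta Γ - 1 - k) ∉ Γ)) →
          tauFun Γ p q a (2 * t + 2) < tauFun Γ p q a (2 * t + 1))
      ∧ ((∀ k : ℕ, k ≤ 2 * sdelta Γ - 1 → (k ∈ Γ ↔ (2 * sdelta Γ - 1 - k) ∉ Γ)) →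
          {v : RootV (rootT0 Γ p q a) (tauFun Γ p q a) |
              IsLocMin (rootAdj (rootT0 Γ p q a) (tauFun Γ p q a))
                (rootχ (rootT0 Γ p q a) (tauFun Γ p q a)) v}.ncard
            = (tA Γ p q a + 2).toNat
          ∧ ∀ (t' : ℕ) (h1 : 2 * t' ≤ rootT0 Γ p q a)
              (h2 : tauFun Γ p q a (2 * t') ≤ tauFun Γ p q a (2 * t')),
              (t' : ℤ) ≤ tA Γ p q a + 1 →
              IsLocMin (rootAdj (rootT0 Γ p q a) (tauFun Γ p q a))
                (rootχ (rootT0 Γ p q a) (tauFun Γ p q a))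
                (rootMk (rootT0 Γ p q a) (tauFun Γ p q a) (2 * t')
                  (tauFun Γ p q a (2 * t')) h1 h2)) :=
  tau_odd_values_and_local_minima_general Γ h0 hfin p q a hp hq t ht
end

section
/- Let Γ be a symmetric numerical semigroup with δ := #(ℕ∖Γ) ≥ 1, μ := 2δ, and α_i := #{k ∈ ℕ∖Γ : k > i}. Then for every 0 ≤ i ≤ μ−2 one has α_{μ−2−i} − α_i = i + 1 − δ; equivalently, with Q(t) := Σ_{i=0}^{μ−2} α_i t^i, one has the Laurent polynomial identity t^{μ−2}·Q(1/t) − Q(t) = (δ(1 + t^{μ−1}) − (1 + t + ⋯ + t^{μ−1}))/(t−1). -/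
/-- For a symmetric numerical semigroup `Γ` with
`δ = #(ℕ∖Γ) ≥ 1`, `μ = 2δ`, and `α_i = #{k ∈ ℕ∖Γ : k > i}`, one has
`α_{μ−2−i} − α_i = i + 1 − δ` for every `0 ≤ i ≤ μ−2`. -/
theorem alpha_symmetry_of_symmetric_semigroup
    (Γ : Set ℕ)
    (h0 : 0 ∈ Γ) (hadd : ∀ x ∈ Γ, ∀ y ∈ Γ, x + y ∈ Γ)
    (hfin : Γᶜ.Finite)
    (δ : ℕ) (hδ : δ = Γᶜ.ncard) (hδ1 : 1 ≤ δ)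
    (hsym : ∀ k : ℕ, k ≤ 2 * δ - 1 → (k ∈ Γ ↔ (2 * δ - 1 - k) ∉ Γ))
    (μ : ℕ) (hμ : μ = 2 * δ)
    (α : ℕ → ℕ) (hα : ∀ i, α i = {k : ℕ | k ∉ Γ ∧ i < k}.ncard) :
    ∀ i : ℕ, i ≤ μ - 2 → (α (μ - 2 - i) : ℤ) - (α i : ℤ) = (i : ℤ) + 1 - δ := by
  classical
  subst hμ
  intro i hi
  set S : Finset ℕ := (Finset.range (2*δ)).filter (fun k => k ∉ Γ) with hS
  set T : Finset ℕ := (Finset.range (2*δ)).filter (fun k => k ∈ Γ) with hT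
  have hST : S.card + T.card = 2*δ := by
    have h := Finset.card_filter_add_card_filter_not
      (s := Finset.range (2*δ)) (p := fun k => k ∉ Γ)
    simp only [not_not, Finset.card_range] at h
    rw [hS, hT]
    exact h
  -- the involution k ↦ 2δ-1-k swaps S and T
  have hTS : T.card = S.card := by
    apply Finset.card_bij' (fun k _ => 2*δ-1-k) (fun k _ => 2*δ-1-k)
    · intro a ha
      simp only [hT, Finset.mem_filter, Finset.mem_range] at ha
      simp only [hS, Finset.mem_filter, Finset.mem_range]
      constructor
      · omega
      · exact (hsym a (by omega)).mp ha.2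
    · intro b hb
      simp only [hS, Finset.mem_filter, Finset.mem_range] at hb
      simp only [hT, Finset.mem_filter, Finset.mem_range]
      refine ⟨by omega, ?_⟩
      by_contra hc
      have := (hsym (2*δ-1-b) (by omega)).mpr
      have h2 : 2*δ-1-(2*δ-1-b) = b := by omega
      rw [h2] at this
      exact hc (this hb.2)
    · intro a ha
      simp only [hT, Finset.mem_filter, Finset.mem_range] at ha
      omega
    · intro b hb
      simp only [hS, Finset.mem_filter, Finset.mem_range] at hb
      omega
  have hScard : S.card = δ := by omega
  -- Γᶜ = S
  have hcomp : Γᶜ = (↑S : Set ℕ) := by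
    refine (Set.eq_of_subset_of_ncard_le ?_ ?_ hfin).symm
    · intro k hk
      simp only [hS, Finset.coe_filter, Set.mem_setOf_eq, Finset.mem_range] at hk
      exact hk.2
    · rw [← hδ, Set.ncard_coe_finset, hScard]
  have hgap_lt : ∀ k : ℕ, k ∉ Γ → k < 2*δ := by
    intro k hk
    have : k ∈ Γᶜ := hk
    rw [hcomp] at this
    simp only [hS, Finset.coe_filter, Set.mem_setOf_eq, Finset.mem_range] at this
    exact this.1
  -- α j as a Finset card
  have hαcard : ∀ j : ℕ, α j = (S.filter (fun k => j < k)).card := by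
    intro j
    rw [hα, ← Set.ncard_coe_finset]
    congr 1
    ext k
    simp only [hS, Finset.coe_filter, Set.mem_setOf_eq, Finset.mem_filter,
      Finset.mem_range]
    constructor
    · rintro ⟨h1, h2⟩; exact ⟨⟨hgap_lt k h1, h1⟩, h2⟩
    · rintro ⟨⟨_, h1⟩, h2⟩; exact ⟨h1, h2⟩
  set A : Finset ℕ := S.filter (fun k => k ≤ i) with hA
  set B : Finset ℕ := T.filter (fun k => k ≤ i) with hB
  -- α i = δ - A.card  (as: α i + A.card = δ)
  have hαi : α i + A.card = δ := by
    have h := Finset.card_filter_add_card_filter_not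
      (s := S) (p := fun k => i < k)
    simp only [not_lt] at h
    rw [hαcard i, hA, ← hScard]
    exact h
  -- α (2δ-2-i) = B.card via the involution
  have hα2 : α (2*δ-2-i) = B.card := by
    rw [hαcard]
    symm
    apply Finset.card_bij' (fun k _ => 2*δ-1-k) (fun k _ => 2*δ-1-k)
    · intro a ha
      simp only [hB, hT, Finset.mem_filter, Finset.mem_range] at ha
      obtain ⟨⟨ha1, ha2⟩, ha3⟩ := ha
      simp only [hS, Finset.mem_filter, Finset.mem_range]
      refine ⟨⟨by omega, (hsym a (by omega)).mp ha2⟩, by omega⟩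
    · intro b hb
      simp only [hS, Finset.mem_filter, Finset.mem_range] at hb
      obtain ⟨⟨hb1, hb2⟩, hb3⟩ := hb
      simp only [hB, hT, Finset.mem_filter, Finset.mem_range]
      refine ⟨⟨by omega, ?_⟩, by omega⟩
      by_contra hc
      have := (hsym (2*δ-1-b) (by omega)).mpr
      have h2 : 2*δ-1-(2*δ-1-b) = b := by omega
      rw [h2] at this
      exact hc (this hb2)
    · intro a ha
      simp only [hB, hT, Finset.mem_filter, Finset.mem_range] at ha
      omega
    · intro b hb
      simp only [hS, Finset.mem_filter, Finset.mem_range] at hb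
      omega
  -- A.card + B.card = i + 1
  have hAB : A.card + B.card = i + 1 := by
    have h1 : (Finset.range (2*δ)).filter (fun k => k ≤ i) = Finset.range (i+1) := by
      ext k
      simp only [Finset.mem_filter, Finset.mem_range]
      omega
    have h2 : A = ((Finset.range (2*δ)).filter (fun k => k ≤ i)).filter
        (fun k => k ∉ Γ) := by
      rw [hA, hS, Finset.filter_filter, Finset.filter_filter]
      apply Finset.filter_congr
      intro k _
      tauto
    have h3 : B = ((Finset.range (2*δ)).filter (fun k => k ≤ i)).filter
        (fun k => ¬ k ∉ Γ) := by
      rw [hB, hT, Finset.filter_filter, Finset.filter_filter]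
      apply Finset.filter_congr
      intro k _
      tauto
    rw [h2, h3, Finset.card_filter_add_card_filter_not, h1,
      Finset.card_range]
  rw [hα2]
  omega
end

section
/- Let g ≥ 1 and let (p_1,q_1),…,(p_g,q_g) be Newton pairs: integers with p_i ≥ 2, q_i ≥ 1, q_1 > p_1 and gcd(p_i,q_i) = 1. Define the linking pairs by a_1 := q_1 and a_{i+1} := q_{i+1} + p_{i+1}·p_i·a_i for 1 ≤ i ≤ g−1. Then μ := Σ_{i=1}^{g} a_i(p_i − 1)·p_{i+1}⋯p_g − p_1⋯p_g + 1 satisfies μ < a_g·p_g. -/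
/-- For Newton pairs `(p_i,q_i)` (`p_i ≥ 2`, `q_i ≥ 1`,
`q_1 > p_1`, `gcd(p_i,q_i) = 1`) and the associated linking pairs
`a_1 = q_1`, `a_{i+1} = q_{i+1} + p_{i+1}·p_i·a_i`, the Milnor number
`μ = Σ_{i=1}^{g} a_i(p_i − 1)·p_{i+1}⋯p_g − p_1⋯p_g + 1` satisfies
`μ < a_g·p_g`. -/
theorem milnor_number_lt_mf
    (g : ℕ) (hg : 1 ≤ g) (p q : ℕ → ℕ)
    (hp : ∀ i, 1 ≤ i → i ≤ g → 2 ≤ p i)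
    (hq : ∀ i, 1 ≤ i → i ≤ g → 1 ≤ q i)
    (hq1 : p 1 < q 1)
    (hcop : ∀ i, 1 ≤ i → i ≤ g → Nat.Coprime (p i) (q i))
    (a : ℕ → ℕ) (ha1 : a 1 = q 1)
    (ha : ∀ i, 1 ≤ i → i ≤ g - 1 → a (i + 1) = q (i + 1) + p (i + 1) * p i * a i)
    (μ : ℤ)
    (hμ : μ = (∑ i ∈ Finset.Icc 1 g,
          (a i : ℤ) * ((p i : ℤ) - 1) * ∏ j ∈ Finset.Icc (i + 1) g, (p j : ℤ))
        - (∏ i ∈ Finset.Icc 1 g, (p i : ℤ)) + 1) :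
    μ < (a g : ℤ) * (p g : ℤ) := by
  revert hp hq hcop ha μ hμ
  induction g, hg using Nat.le_induction with
  | base =>
    intro hp hq hcop ha μ hμ
    have hp1 : (2 : ℤ) ≤ (p 1 : ℤ) := by exact_mod_cast hp 1 le_rfl le_rfl
    have hq1' : ((p 1 : ℤ)) < (q 1 : ℤ) := by exact_mod_cast hq1
    rw [show Finset.Icc 1 1 = {1} from Finset.Icc_self 1, Finset.sum_singleton,
      Finset.prod_singleton, show Finset.Icc 2 1 = (∅ : Finset ℕ) from
        Finset.Icc_eq_empty (by omega), Finset.prod_empty, mul_one] at hμ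
    rw [hμ, ha1]
    nlinarith
  | succ g hg IH =>
    intro hp hq hcop ha μ hμ
    have hp' : ∀ i, 1 ≤ i → i ≤ g → 2 ≤ p i := fun i h1 h2 => hp i h1 (h2.trans (by omega))
    have hq' : ∀ i, 1 ≤ i → i ≤ g → 1 ≤ q i := fun i h1 h2 => hq i h1 (h2.trans (by omega))
    have hcop' : ∀ i, 1 ≤ i → i ≤ g → Nat.Coprime (p i) (q i) :=
      fun i h1 h2 => hcop i h1 (h2.trans (by omega))
    have ha' : ∀ i, 1 ≤ i → i ≤ g - 1 → a (i + 1) = q (i + 1) + p (i + 1) * p i * a i :=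
      fun i h1 h2 => ha i h1 (by omega)
    set S : ℤ := ∑ i ∈ Finset.Icc 1 g,
        (a i : ℤ) * ((p i : ℤ) - 1) * ∏ j ∈ Finset.Icc (i + 1) g, (p j : ℤ) with hS
    set Pg : ℤ := ∏ i ∈ Finset.Icc 1 g, (p i : ℤ) with hPg
    have hIH : S - Pg + 1 < (a g : ℤ) * (p g : ℤ) := IH hp' hq' hcop' ha' _ rfl
    have hsum2 : (∑ i ∈ Finset.Icc 1 g,
        (a i : ℤ) * ((p i : ℤ) - 1) * ∏ j ∈ Finset.Icc (i + 1) (g + 1), (p j : ℤ))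
        = S * (p (g + 1) : ℤ) := by
      rw [hS, Finset.sum_mul]
      apply Finset.sum_congr rfl
      intro i hi
      have hi' : i + 1 ≤ g + 1 := by
        have := (Finset.mem_Icc.mp hi).2; omega
      rw [Finset.prod_Icc_succ_top hi', ← mul_assoc]
    have hμ' : μ = S * (p (g + 1) : ℤ) + (a (g + 1) : ℤ) * ((p (g + 1) : ℤ) - 1)
        - Pg * (p (g + 1) : ℤ) + 1 := by
      rw [hμ, Finset.sum_Icc_succ_top (by omega : 1 ≤ g + 1),
        Finset.prod_Icc_succ_top (by omega : 1 ≤ g + 1), hsum2,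
        show Finset.Icc (g + 1 + 1) (g + 1) = (∅ : Finset ℕ) from
          Finset.Icc_eq_empty (by omega), Finset.prod_empty, mul_one]
    have haG : (a (g + 1) : ℤ) = (q (g + 1) : ℤ) + (p (g + 1) : ℤ) * (p g : ℤ) * (a g : ℤ) := by
      have := ha g hg (by omega)
      push_cast [this]; ring
    have hpg1 : (2 : ℤ) ≤ (p (g + 1) : ℤ) := by exact_mod_cast hp (g + 1) (by omega) le_rfl
    have hqg1 : (1 : ℤ) ≤ (q (g + 1) : ℤ) := by exact_mod_cast hq (g + 1) (by omega) le_rfl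
    have key : (S - Pg + 1 - 1) * (p (g + 1) : ℤ)
        ≤ ((a g : ℤ) * (p g : ℤ) - 2) * (p (g + 1) : ℤ) :=
      mul_le_mul_of_nonneg_right (by linarith) (by linarith)
    rw [hμ', haG]
    nlinarith [key]
end
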